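/- arXiv:1510.04649 — 5 statements merged into one kernel-verified Lean document; each statement's English description precedes it below -/
import Mathlib

section
/- Let G be an ultragraph with infinitely many edges such that for each edge e the set {f ∈ G¹ : s(f) ∉ r(e)} is finite. Then for any finite paths a, b with r(a) ∩ r(b) ≠ ∅, the set X_{ab⁻¹} := {x ∈ X : x = ay with s(y) ∈ r(a) ∩ r(b)} ∪ {a} is clopen in the edge shift X of G. -/
namespace OTW

/-- The Ott–Tomforde–Willis full shift over `A`, modelled as the set of "gap-free"
functions `ℕ → Option A`: finite words are eventually `none`, infinite sequences never. -/
def FullShift (A : Type*) : Set (ℕ → Option A) :=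
  {x | ∀ n, x n = none → x (n + 1) = none}

variable {A : Type*}

/-- The finite word `l` as an element of the full shift. -/
def ofList (l : List A) : ℕ → Option A :=
  fun n => if h : n < l.length then some (l.get ⟨n, h⟩) else none

theorem ofList_mem (l : List A) : ofList l ∈ FullShift A := by
  intro n hn
  by_cases h : n < l.length
  · simp [ofList, h] at hn
  · simp only [ofList]
    rw [dif_neg (by omega)]

/-- The infinite sequence `y` as an element of the full shift. -/
def ofSeq (y : ℕ → A) : ℕ → Option A := fun n => some (y n)

theorem ofSeq_mem (y : ℕ → A) : ofSeq y ∈ FullShift A := by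
  intro n hn
  simp [ofSeq] at hn

/-- Truncation of `x` to its first `p` letters. -/
def trunc (p : ℕ) (x : ℕ → Option A) : ℕ → Option A := fun n => if n < p then x n else none

theorem trunc_mem {x : ℕ → Option A} (hx : x ∈ FullShift A) (p : ℕ) :
    trunc p x ∈ FullShift A := by
  intro n hn
  simp only [trunc] at hn ⊢
  by_cases h : n + 1 < p
  · rw [if_pos h]
    rw [if_pos (by omega)] at hn
    exact hx n hn
  · rw [if_neg h]

/-- Generalized cylinder set `Z(w, F)`: sequences extending the finite word `w` whose
next letter (if any) is not in the finite set `F`. -/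
def Cyl (w : List A) (F : Finset A) : Set (ℕ → Option A) :=
  {x | (∀ i (h : i < w.length), x i = some (w.get ⟨i, h⟩)) ∧ ∀ a ∈ F, x w.length ≠ some a}

/-- The topology on the full shift generated by the generalized cylinder sets. -/
instance instTopoFullShift (A : Type*) : TopologicalSpace ↥(FullShift A) :=
  TopologicalSpace.generateFrom {S | ∃ w F, S = Subtype.val ⁻¹' Cyl w F}

/-- The shift map on the full shift. -/
def shiftMap (x : ↥(FullShift A)) : ↥(FullShift A) :=
  ⟨fun n => x.1 (n + 1), fun n hn => x.2 (n + 1) hn⟩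

/-- The length of an element of the full shift, valued in `ℕ∞`. -/
noncomputable def len (x : ℕ → Option A) : ℕ∞ := ⨅ n ∈ {n | x n = none}, (n : ℕ∞)

/-- `x` is an infinite sequence. -/
def IsInf (x : ℕ → Option A) : Prop := ∀ n, x n ≠ none

/-- The word `w` occurs in `x` at position `k`. -/
def hasBlockAt (x : ℕ → Option A) (w : List A) (k : ℕ) : Prop :=
  ∀ i (h : i < w.length), x (k + i) = some (w.get ⟨i, h⟩)

/-- `X_F^inf` : infinite sequences avoiding all blocks from `F`. -/
def XFinf (F : Set (List A)) : Set (ℕ → Option A) :=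
  {x | IsInf x ∧ ∀ w ∈ F, ∀ k, ¬ hasBlockAt x w k}

/-- Concatenation of a finite word with an infinite sequence. -/
def listCat (w : List A) (y : ℕ → A) : ℕ → Option A :=
  fun n => if h : n < w.length then some (w.get ⟨n, h⟩) else some (y (n - w.length))

/-- `X_F^fin` : finite words admitting infinitely many one-letter extensions to
elements of `X_F^inf`. -/
def XFfin (F : Set (List A)) : Set (ℕ → Option A) :=
  {x | ∃ w : List A, x = ofList w ∧
    {a : A | ∃ y : ℕ → A, listCat (w ++ [a]) y ∈ XFinf F}.Infinite}

/-- The shift space `X_F` determined by the forbidden words `F`. -/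
def XF (F : Set (List A)) : Set (ℕ → Option A) := XFinf F ∪ XFfin F

/-- An ultragraph: sources are vertices, ranges are sets of vertices. -/
structure Ultragraph (V E : Type*) where
  s : E → V
  r : E → Set V

/-- The set of infinite paths of an ultragraph. -/
def Ginf {V E : Type*} (G : Ultragraph V E) : Set (ℕ → Option E) :=
  {x | IsInf x ∧ ∀ n e f, x n = some e → x (n + 1) = some f → G.s f ∈ G.r e}

/-- The edge shift of an ultragraph: the closure of the set of infinite paths. -/
def edgeShift {V E : Type*} (G : Ultragraph V E) : Set ↥(FullShift E) :=
  closure {x : ↥(FullShift E) | x.1 ∈ Ginf G}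

/-- A (nonempty) finite path in an ultragraph. -/
def IsPath {V E : Type*} (G : Ultragraph V E) (l : List E) : Prop :=
  l ≠ [] ∧ l.Chain' (fun e f => G.s f ∈ G.r e)

/-- A directed graph. -/
structure DirGraph (V E : Type*) where
  s : E → V
  r : E → V

/-- A directed graph viewed as an ultragraph. -/
def DirGraph.toUltragraph {V E : Type*} (G : DirGraph V E) : Ultragraph V E :=
  ⟨G.s, fun e => {G.r e}⟩

/-- The length-one word `e` as an element of the full shift. -/
def word1 (e : A) : ↥(FullShift A) := ⟨ofList [e], ofList_mem _⟩

/-- A conjugacy between shift spaces: a length-preserving, shift-commuting, continuous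
bijection (between shift-invariant subsets). -/
structure IsConjugacy {A B : Type*} (X : Set ↥(FullShift A)) (Y : Set ↥(FullShift B))
    (φ : ↥X → ↥Y) : Prop where
  shiftInvX : ∀ x : ↥X, shiftMap x.1 ∈ X
  shiftInvY : ∀ y : ↥Y, shiftMap y.1 ∈ Y
  bijective : Function.Bijective φ
  continuous : Continuous φ
  shift_comm : ∀ x : ↥X, (φ ⟨shiftMap x.1, shiftInvX x⟩).1 = shiftMap (φ x).1
  len_eq : ∀ x : ↥X, len (φ x).1.1 = len x.1.1

/-- An eventually finite periodic conjugacy: for some `p ≥ 2`, the initial block of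
length `p` of every `p`-periodic point is mapped to the initial block of length `p`
of its image. -/
def EvFinPeriodic {A B : Type*} {X : Set ↥(FullShift A)} {Y : Set ↥(FullShift B)}
    (φ : ↥X → ↥Y) : Prop :=
  ∃ p : ℕ, 2 ≤ p ∧ ∀ x : ↥X, IsInf x.1.1 → (∀ k, x.1.1 (k + p) = x.1.1 k) →
    ∀ h : (⟨trunc p x.1.1, trunc_mem x.1.2 p⟩ : ↥(FullShift A)) ∈ X,
      ∀ i < p, (φ ⟨⟨trunc p x.1.1, trunc_mem x.1.2 p⟩, h⟩).1.1 i = (φ x).1.1 i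

/-- The range of a finite path (`univ` for the empty path). -/
def rng {V E : Type*} (G : Ultragraph V E) (l : List E) : Set V :=
  (l.getLast?.map G.r).getD Set.univ

/-- The set `X_{ab⁻¹}` of the partial action: elements of the edge shift beginning
with `a` whose next edge (if any) has source in `r(a) ∩ r(b)`. -/
def XwS {V E : Type*} (G : Ultragraph V E) (a b : List E) : Set ↥(FullShift E) :=
  {x | x ∈ edgeShift G ∧ (∀ i (h : i < a.length), x.1 i = some (a.get ⟨i, h⟩)) ∧
    ∀ e, x.1 a.length = some e → G.s e ∈ rng G a ∩ rng G b}

/-- The map `θ_{ba⁻¹}` (raw version): replaces the initial block `a` by `b`. -/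
def theta {E : Type*} (a b : List E) (x : ℕ → Option E) : ℕ → Option E :=
  fun n => if h : n < b.length then some (b.get ⟨n, h⟩) else x (n - b.length + a.length)

theorem theta_mem {E : Type*} {x : ℕ → Option E} (hx : x ∈ FullShift E) (a b : List E) :
    theta a b x ∈ FullShift E := by
  intro n hn
  simp only [theta] at hn ⊢
  split at hn
  · simp at hn
  · rename_i h
    rw [dif_neg (by omega)]
    have h2 : n + 1 - b.length + a.length = (n - b.length + a.length) + 1 := by omega
    rw [h2]
    exact hx _ hn

/-- The map `θ_{ba⁻¹}` as a self-map of the full shift. -/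
def thetaF {E : Type*} (a b : List E) (x : ↥(FullShift E)) : ↥(FullShift E) :=
  ⟨theta a b x.1, theta_mem x.2 a b⟩

/-- A valid pair `(a, b)` representing the reduced group element `ab⁻¹` of the set `V`. -/
def ValidPair {V E : Type*} (G : Ultragraph V E) (a b : List E) : Prop :=
  (a = [] ∨ IsPath G a) ∧ (b = [] ∨ IsPath G b) ∧ (rng G a ∩ rng G b).Nonempty ∧
  ∀ (ha : a ≠ []) (hb : b ≠ []), a.getLast ha ≠ b.getLast hb

/-- The element `ab⁻¹` of the free group on the edges. -/
def pf {E : Type*} (a b : List E) : FreeGroup E :=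
  (a.map FreeGroup.of).prod * ((b.map FreeGroup.of).prod)⁻¹


/-- the sets `X_{ab⁻¹}` are clopen in the edge shift. -/
theorem Xab_isClopen {V E : Type*} [Countable V] [Countable E] [Infinite E]
    (G : Ultragraph V E) (hr : ∀ e, (G.r e).Nonempty)
    (hfin : ∀ e : E, {f : E | G.s f ∉ G.r e}.Finite)
    (a b : List E) (ha : IsPath G a) (hb : IsPath G b)
    (hab : (G.r (a.getLast ha.1) ∩ G.r (b.getLast hb.1)).Nonempty) :
    IsClopen {x : ↥(edgeShift G) |
      (∀ i (h : i < a.length), x.1.1 i = some (a.get ⟨i, h⟩)) ∧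
      ∀ e, x.1.1 a.length = some e →
        G.s e ∈ G.r (a.getLast ha.1) ∩ G.r (b.getLast hb.1)} := by
  classical
  set e1 := a.getLast ha.1 with he1
  set e2 := b.getLast hb.1 with he2
  have hbadfin : {f : E | ¬ (G.s f ∈ G.r e1 ∩ G.r e2)}.Finite := by
    refine ((hfin e1).union (hfin e2)).subset ?_
    intro f hf
    by_contra h
    simp only [Set.mem_union, Set.mem_setOf_eq, not_or, not_not] at h
    exact hf ⟨h.1, h.2⟩
  set F : Finset E := hbadfin.toFinset with hF
  have hmemF : ∀ f : E, f ∈ F ↔ ¬ (G.s f ∈ G.r e1 ∩ G.r e2) := by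
    intro f; simp [hF, Set.Finite.mem_toFinset]
  have hopen_cyl : ∀ (w : List E) (S : Finset E),
      IsOpen (Subtype.val ⁻¹' Cyl w S : Set ↥(FullShift E)) :=
    fun w S => TopologicalSpace.isOpen_generateFrom_of_mem ⟨w, S, rfl⟩
  constructor
  · -- closed: complement is open
    rw [← isOpen_compl_iff]
    have hset : {x : ↥(edgeShift G) |
        (∀ i (h : i < a.length), x.1.1 i = some (a.get ⟨i, h⟩)) ∧
        ∀ e, x.1.1 a.length = some e → G.s e ∈ G.r e1 ∩ G.r e2}ᶜ =
        Subtype.val ⁻¹' ((⋃ i : Fin a.length,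
            Subtype.val ⁻¹' Cyl (a.take i) {a.get i}) ∪
          (⋃ f ∈ F, Subtype.val ⁻¹' Cyl (a ++ [f]) ∅)) := by
      ext x
      simp only [Set.mem_compl_iff, Set.mem_setOf_eq, Set.mem_preimage, Set.mem_union,
        Set.mem_iUnion, Cyl, Set.mem_setOf_eq, not_and, not_forall]
      constructor
      · intro hx
        by_cases hP : ∀ i (h : i < a.length), x.1.1 i = some (a.get ⟨i, h⟩)
        · obtain ⟨e, he, hbad⟩ := hx hP
          right
          refine ⟨e, (hmemF e).2 hbad, ?_, by simp⟩
          intro i hi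
          rcases Nat.lt_or_ge i a.length with h | h
          · have := hP i h
            simp only [List.get_eq_getElem] at this ⊢
            rw [List.getElem_append_left h]
            exact this
          · have hie : i = a.length := by
              simp only [List.length_append, List.length_singleton] at hi; omega
            subst hie
            simp only [List.get_eq_getElem, List.getElem_concat_length]
            exact he
        · left
          push_neg at hP
          have hex : ∃ i, ∃ h : i < a.length, x.1.1 i ≠ some (a.get ⟨i, h⟩) := hP
          let n := Nat.find hex
          obtain ⟨hn, hne⟩ := Nat.find_spec hex
          refine ⟨⟨n, hn⟩, ?_, ?_⟩
          · intro i hi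
            have hilen : i < n := by
              exact ((by simpa [List.length_take] using hi : i < n ∧ i < a.length)).1
            have hia : i < a.length := lt_trans hilen hn
            have := Nat.find_min hex hilen
            push_neg at this
            have hxi := this hia
            simp only [List.get_eq_getElem, List.getElem_take] at hxi ⊢
            exact hxi
          · intro f hf
            have hfl : f = a.get ⟨n, hn⟩ := by simpa using hf
            subst hfl
            have hlen : (a.take n).length = n := by
              rw [List.length_take]; exact Nat.min_eq_left (Nat.le_of_lt hn)
            rw [hlen]
            exact hne
      · rintro (⟨⟨i, hi⟩, hagree, hne⟩ | ⟨f, hfF, hagree, -⟩)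
        · intro hP
          exfalso
          have hlen : (a.take i).length = i := by
            simp [List.length_take, Nat.le_of_lt hi]
          have := hne (a.get ⟨i, hi⟩) (by simp)
          rw [hlen] at this
          exact this (hP i hi)
        · intro hP
          refine ⟨f, ?_, (hmemF f).1 hfF⟩
          have := hagree a.length (by simp)
          simp only [List.get_eq_getElem, List.getElem_concat_length] at this
          exact this
    rw [hset]
    refine (continuous_subtype_val).isOpen_preimage _ ?_
    exact IsOpen.union (isOpen_iUnion fun i => hopen_cyl _ _)
      (isOpen_biUnion fun f _ => hopen_cyl _ _)
  · -- open
    have hset : {x : ↥(edgeShift G) |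
        (∀ i (h : i < a.length), x.1.1 i = some (a.get ⟨i, h⟩)) ∧
        ∀ e, x.1.1 a.length = some e → G.s e ∈ G.r e1 ∩ G.r e2} =
        Subtype.val ⁻¹' (Subtype.val ⁻¹' Cyl a F) := by
      ext x
      simp only [Set.mem_setOf_eq, Set.mem_preimage, Cyl, Set.mem_setOf_eq]
      refine and_congr Iff.rfl ?_
      constructor
      · intro hQ f hfF hxf
        exact (hmemF f).1 hfF (hQ f hxf)
      · intro hQ e he
        by_contra hbad
        exact hQ e ((hmemF e).2 hbad) he
    rw [hset]
    exact (continuous_subtype_val).isOpen_preimage _ (hopen_cyl a F)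

end OTW
end

section
/- Let G be an ultragraph with infinitely many edges and s⁻¹(r(e))^c finite for each edge e, and let X be its edge shift. Let 𝔽 be the free group on G¹, W ⊆ 𝔽 the set of finite paths, and V = {ab⁻¹ : a, b ∈ W ∪ {0}}. With X_g and θ_g defined as in the paper (θ_a(x) = ax, θ_{a⁻¹}(x) = σ^{|a|}(x), θ_{ba⁻¹}(ay) = by, with the conventions θ_a(Ø) = a, θ_{a⁻¹}(a) = Ø, θ_{ba⁻¹}(a) = b), for each g ∈ V the map θ_g : X_{g⁻¹} → X_g is a homeomorphism, and for all g, h ∈ V: θ_g(X_{g⁻¹} ∩ X_h) ⊆ X_{gh} and θ_g ∘ θ_h = θ_{gh} on X_{(gh)⁻¹} ∩ X_{h⁻¹}. -/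
namespace OTW

variable {A : Type*}

section AuxFG
variable {E : Type*}

variable {E : Type*}

def posW (l : List E) : List (E × Bool) := l.map (fun e => (e, true))
def negW (l : List E) : List (E × Bool) := (l.map (fun e => (e, false))).reverse

lemma posW_append (l m : List E) : posW (l ++ m) = posW l ++ posW m := by simp [posW]

lemma invRev_posW (l : List E) : FreeGroup.invRev (posW l) = negW l := by
  simp [FreeGroup.invRev, posW, negW, Function.comp]

lemma prodOf (l : List E) : (l.map FreeGroup.of).prod = FreeGroup.mk (posW l) := by
  induction l with
  | nil => simp [posW, ← FreeGroup.one_eq_mk]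
  | cons x t ih =>
      have hx : FreeGroup.of x = FreeGroup.mk [(x, true)] := rfl
      simp only [List.map_cons, List.prod_cons, ih, hx, FreeGroup.mul_mk]
      rfl

lemma prodOf_inv (l : List E) : ((l.map FreeGroup.of).prod)⁻¹ = FreeGroup.mk (negW l) := by
  rw [prodOf, FreeGroup.inv_mk, invRev_posW]

lemma pf_eq_mk (a b : List E) : pf a b = FreeGroup.mk (posW a ++ negW b) := by
  rw [pf, prodOf, prodOf_inv, FreeGroup.mul_mk]

def RedW (L : List (E × Bool)) : Prop := L.Chain' (fun s t => ¬(s.1 = t.1 ∧ s.2 = !t.2))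

lemma reduce_eq_self [DecidableEq E] {L : List (E × Bool)} (h : RedW L) :
    FreeGroup.reduce L = L := by
  induction L with
  | nil => rfl
  | cons x t ih =>
      have ht : RedW t := h.tail
      rw [FreeGroup.reduce.cons, ih ht]
      cases t with
      | nil => rfl
      | cons y s =>
          have hxy : ¬(x.1 = y.1 ∧ x.2 = !y.2) := (List.isChain_cons_cons.1 h).1
          simp [hxy]

lemma mk_inj {L L' : List (E × Bool)} (hL : RedW L) (hL' : RedW L')
    (h : FreeGroup.mk L = FreeGroup.mk L') : L = L' := by
  classical
  have h2 := congrArg FreeGroup.toWord h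
  rwa [FreeGroup.toWord_mk, FreeGroup.toWord_mk, reduce_eq_self hL, reduce_eq_self hL'] at h2

lemma redW_of_const : ∀ (L : List (E × Bool)) (c : Bool), (∀ z ∈ L, z.2 = c) → RedW L
  | [], _, _ => List.isChain_nil
  | [z], _, _ => List.isChain_singleton z
  | z1 :: z2 :: t, c, h => by
      refine List.isChain_cons_cons.2 ⟨?_, redW_of_const (z2 :: t) c (fun z hz => h z (List.mem_cons_of_mem _ hz))⟩
      rintro ⟨-, hc⟩
      have h1 := h z1 (by simp)
      have h2 := h z2 (by simp)
      rw [h1, h2] at hc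
      simp at hc

lemma mem_posW_snd {l : List E} {z : E × Bool} (hz : z ∈ posW l) : z.2 = true := by
  simp only [posW, List.mem_map] at hz; obtain ⟨e, -, rfl⟩ := hz; rfl

lemma mem_negW_snd {l : List E} {z : E × Bool} (hz : z ∈ negW l) : z.2 = false := by
  simp only [negW, List.mem_reverse, List.mem_map] at hz; obtain ⟨e, -, rfl⟩ := hz; rfl

lemma redW_posW (l : List E) : RedW (posW l) := redW_of_const _ true (fun _ => mem_posW_snd)
lemma redW_negW (l : List E) : RedW (negW l) := redW_of_const _ false (fun _ => mem_negW_snd)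

lemma posW_getLast? (l : List E) : (posW l).getLast? = l.getLast?.map (fun e => (e, true)) := by
  simp [posW, List.getLast?_map]

lemma posW_head? (l : List E) : (posW l).head? = l.head?.map (fun e => (e, true)) := by
  simp [posW]

lemma negW_head? (l : List E) : (negW l).head? = l.getLast?.map (fun e => (e, false)) := by
  simp [negW, List.head?_reverse, List.getLast?_map]

lemma negW_getLast? (l : List E) : (negW l).getLast? = l.head?.map (fun e => (e, false)) := by
  simp [negW, List.getLast?_reverse]

/-- reducedness of `posW a ++ negW b` given distinct last letters. -/
lemma redW_pos_neg {a b : List E}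
    (h : ∀ (ha : a ≠ []) (hb : b ≠ []), a.getLast ha ≠ b.getLast hb) :
    RedW (posW a ++ negW b) := by
  refine List.isChain_append.2 ⟨redW_posW a, redW_negW b, ?_⟩
  intro x hx y hy
  rw [posW_getLast?] at hx
  rw [negW_head?] at hy
  rcases ha : a.getLast? with - | ea
  · rw [ha] at hx; simp at hx
  rcases hb : b.getLast? with - | eb
  · rw [hb] at hy; simp at hy
  rw [ha] at hx; rw [hb] at hy
  simp only [Option.map_some, Option.mem_def, Option.some.injEq] at hx hy
  subst hx; subst hy
  have hane : a ≠ [] := by rintro rfl; simp at ha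
  have hbne : b ≠ [] := by rintro rfl; simp at hb
  rintro ⟨h1, -⟩
  exact h hane hbne (by
    have := List.getLast?_eq_getLast hane
    have hb2 := List.getLast?_eq_getLast hbne
    rw [this] at ha; rw [hb2] at hb
    simp only [Option.some.injEq] at ha hb
    simpa [ha, hb] using h1)




lemma splitPN : ∀ (a p : List E) (M N : List (E × Bool)),
    (∀ z ∈ M.head?, z.2 = false) → (∀ z ∈ N, z.2 = false) →
    posW a ++ M = posW p ++ N → a = p ∧ M = N := by
  intro a
  induction a with
  | nil =>
      intro p M N hM hN h
      cases p with
      | nil => exact ⟨rfl, by simpa [posW] using h⟩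
      | cons y p' =>
          exfalso
          simp only [posW, List.map_nil, List.nil_append, List.map_cons, List.cons_append] at h
          have := hM (y, true) (by rw [h]; rfl)
          simp at this
  | cons x a' ih =>
      intro p M N hM hN h
      cases p with
      | nil =>
          exfalso
          simp only [posW, List.map_cons, List.cons_append, List.map_nil, List.nil_append] at h
          have : (x, true) ∈ N := by rw [← h]; simp
          have := hN _ this
          simp at this
      | cons y p' =>
          simp only [posW, List.map_cons, List.cons_append, List.cons.injEq, Prod.mk.injEq] at h
          obtain ⟨⟨rfl, -⟩, h2⟩ := h
          obtain ⟨h3, h4⟩ := ih p' M N hM hN h2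
          exact ⟨by rw [h3], h4⟩

lemma negW_inj {l l' : List E} (h : negW l = negW l') : l = l' := by
  have := List.reverse_injective h
  have h2 : Function.Injective (fun e : E => (e, false)) := by
    intro u v huv; simpa using huv
  exact List.map_injective_iff.2 h2 this

lemma commonPrefix : ∀ (b c : List E), ∃ u b' c' : List E,
    b = u ++ b' ∧ c = u ++ c' ∧ (b' = [] ∨ c' = [] ∨ b'.head? ≠ c'.head?) := by
  intro b
  induction b with
  | nil => intro c; exact ⟨[], [], c, rfl, rfl, Or.inl rfl⟩
  | cons x b0 ih =>
      intro c
      cases c with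
      | nil => exact ⟨[], x :: b0, [], rfl, rfl, Or.inr (Or.inl rfl)⟩
      | cons y c0 =>
          by_cases hxy : x = y
          · obtain ⟨u, b', c', h1, h2, h3⟩ := ih c0
            subst hxy
            exact ⟨x :: u, b', c', by simp [h1], by simp [h2], h3⟩
          · exact ⟨[], x :: b0, y :: c0, rfl, rfl, Or.inr (Or.inr (by simp [hxy]))⟩

lemma negW_head_false (l : List E) : ∀ z ∈ (negW l).head?, z.2 = false := by
  intro z hz
  rw [negW_head?] at hz
  rcases h : l.getLast? with - | e
  · rw [h] at hz; simp at hz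
  · rw [h] at hz; simp only [Option.map_some, Option.mem_def, Option.some.injEq] at hz
    rw [← hz]


lemma classify {a b c d p q : List E}
    (hab : ∀ (h1 : a ≠ []) (h2 : b ≠ []), a.getLast h1 ≠ b.getLast h2)
    (hcd : ∀ (h1 : c ≠ []) (h2 : d ≠ []), c.getLast h1 ≠ d.getLast h2)
    (hpq : ∀ (h1 : p ≠ []) (h2 : q ≠ []), p.getLast h1 ≠ q.getLast h2)
    (heq : pf a b * pf c d = pf p q) :
    (∃ t, t ≠ [] ∧ b = c ++ t ∧ p = a ∧ q = d ++ t) ∨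
    (∃ t, t ≠ [] ∧ c = b ++ t ∧ p = a ++ t ∧ q = d) ∨
    (b = c ∧ ∃ t, a = p ++ t ∧ d = q ++ t) := by
  classical
  have hredPQ : RedW (posW p ++ negW q) := redW_pos_neg hpq
  obtain ⟨u, b', c', hb, hc, hor⟩ := commonPrefix b c
  by_cases hb0 : b' = []
  · by_cases hc0 : c' = []
    · -- b = c, pure suffix cancellation between a and d
      subst hb0; subst hc0
      simp only [List.append_nil] at hb hc
      subst hb; subst hc
      have key : pf a d = pf p q := by
        rw [← heq]; simp only [pf]; group
      obtain ⟨v, a1, d1, ha, hd, hor2⟩ := commonPrefix a.reverse d.reverse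
      have haEq : a = a1.reverse ++ v.reverse := by
        have := congrArg List.reverse ha; simpa using this
      have hdEq : d = d1.reverse ++ v.reverse := by
        have := congrArg List.reverse hd; simpa using this
      have key2 : pf a1.reverse d1.reverse = pf p q := by
        rw [← key, haEq, hdEq]
        simp only [pf, List.map_append, List.prod_append]
        group
      have hred : RedW (posW a1.reverse ++ negW d1.reverse) := by
        refine redW_pos_neg ?_
        intro h1 h2
        have ha1 : a1 ≠ [] := by simpa using h1
        have hd1 : d1 ≠ [] := by simpa using h2
        rcases hor2 with h | h | h
        · exact absurd h ha1
        · exact absurd h hd1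
        · rw [List.getLast_reverse, List.getLast_reverse]
          intro hEq
          apply h
          rw [List.head?_eq_head ha1, List.head?_eq_head hd1, hEq]
      have key3 : posW a1.reverse ++ negW d1.reverse = posW p ++ negW q := by
        refine mk_inj hred hredPQ ?_
        rw [← pf_eq_mk, ← pf_eq_mk, key2]
      obtain ⟨hp, hq⟩ := splitPN _ _ _ _ (negW_head_false _) (fun z hz => mem_negW_snd hz) key3
      refine Or.inr (Or.inr ⟨rfl, v.reverse, ?_, ?_⟩)
      · rw [haEq, hp]
      · rw [hdEq, negW_inj hq]
    · -- c = b ++ c'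
      subst hb0
      simp only [List.append_nil] at hb
      subst hb; subst hc
      -- now c = b ++ c' (u was replaced by b)
      have key : pf (a ++ c') d = pf p q := by
        rw [← heq]
        simp only [pf, List.map_append, List.prod_append]
        group
      have hlastc : ∀ (h1 : a ++ c' ≠ []) (h2 : d ≠ []),
          (a ++ c').getLast h1 ≠ d.getLast h2 := by
        intro h1 h2
        rw [List.getLast_append_of_ne_nil _ hc0]
        have := hcd (by simp [hc0]) h2
        rwa [List.getLast_append_of_ne_nil _ hc0] at this
      have key3 : posW (a ++ c') ++ negW d = posW p ++ negW q := by
        refine mk_inj (redW_pos_neg hlastc) hredPQ ?_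
        rw [← pf_eq_mk, ← pf_eq_mk, key]
      obtain ⟨hp, hq⟩ := splitPN _ _ _ _ (negW_head_false _) (fun z hz => mem_negW_snd hz) key3
      exact Or.inr (Or.inl ⟨c', hc0, rfl, hp.symm, (negW_inj hq).symm⟩)
  · by_cases hc0 : c' = []
    · -- b = c ++ b'
      subst hc0
      simp only [List.append_nil] at hc
      subst hc; subst hb
      -- now b = c ++ b'
      have key : pf a (d ++ b') = pf p q := by
        rw [← heq]
        simp only [pf, List.map_append, List.prod_append]
        group
      have hlast : ∀ (h1 : a ≠ []) (h2 : d ++ b' ≠ []),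
          a.getLast h1 ≠ (d ++ b').getLast h2 := by
        intro h1 h2
        rw [List.getLast_append_of_ne_nil _ hb0]
        have := hab h1 (by simp [hb0])
        rwa [List.getLast_append_of_ne_nil _ hb0] at this
      have key3 : posW a ++ negW (d ++ b') = posW p ++ negW q := by
        refine mk_inj (redW_pos_neg hlast) hredPQ ?_
        rw [← pf_eq_mk, ← pf_eq_mk, key]
      obtain ⟨hp, hq⟩ := splitPN _ _ _ _ (negW_head_false _) (fun z hz => mem_negW_snd hz) key3
      exact Or.inl ⟨b', hb0, rfl, hp.symm, (negW_inj hq).symm⟩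
    · -- impossible case: middle cancellation stops in the interior
      exfalso
      subst hb; subst hc
      have hor2 : b'.head? ≠ c'.head? := by
        rcases hor with h | h | h
        · exact absurd h hb0
        · exact absurd h hc0
        · exact h
      have key : pf a b' * pf c' d = pf p q := by
        rw [← heq]
        simp only [pf, List.map_append, List.prod_append]
        group
      have key2 : FreeGroup.mk ((posW a ++ negW b') ++ (posW c' ++ negW d)) =
          FreeGroup.mk (posW p ++ negW q) := by
        rw [← FreeGroup.mul_mk, ← pf_eq_mk, ← pf_eq_mk, ← pf_eq_mk, key]
      have hred1 : RedW (posW a ++ negW b') := by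
        refine redW_pos_neg ?_
        intro h1 h2
        have := hab h1 (by simp [hb0])
        rwa [List.getLast_append_of_ne_nil _ hb0] at this
      have hred2 : RedW (posW c' ++ negW d) := by
        refine redW_pos_neg ?_
        intro h1 h2
        have := hcd (by simp [hc0]) h2
        rwa [List.getLast_append_of_ne_nil _ hc0] at this
      have hredL : RedW ((posW a ++ negW b') ++ (posW c' ++ negW d)) := by
        refine List.isChain_append.2 ⟨hred1, hred2, ?_⟩
        intro x hx y hy
        rw [List.getLast?_append] at hx
        have hb'ne : (negW b').getLast? = some ((b'.head hb0, false)) := by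
          rw [negW_getLast?, List.head?_eq_head hb0]; rfl
        rw [hb'ne] at hx
        simp only [Option.some_or, Option.mem_def, Option.some.injEq] at hx
        subst hx
        rw [List.head?_append] at hy
        have hc'ne : (posW c').head? = some ((c'.head hc0, true)) := by
          rw [posW_head?, List.head?_eq_head hc0]; rfl
        rw [hc'ne] at hy
        simp only [Option.some_or, Option.mem_def, Option.some.injEq] at hy
        subst hy
        rintro ⟨h1, -⟩
        apply hor2
        rw [List.head?_eq_head hb0, List.head?_eq_head hc0]
        exact congrArg some h1
      have key3 : posW a ++ (negW b' ++ (posW c' ++ negW d)) = posW p ++ negW q := by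
        have := mk_inj hredL hredPQ key2
        rwa [List.append_assoc] at this
      have hM : ∀ z ∈ (negW b' ++ (posW c' ++ negW d)).head?, z.2 = false := by
        intro z hz
        rw [List.head?_append] at hz
        have hb'ne : (negW b').head? = some ((b'.getLast hb0, false)) := by
          rw [negW_head?, List.getLast?_eq_getLast_of_ne_nil hb0]; rfl
        rw [hb'ne] at hz
        simp only [Option.some_or, Option.mem_def, Option.some.injEq] at hz
        rw [← hz]
      obtain ⟨-, hMN⟩ := splitPN _ _ _ _ hM (fun z hz => mem_negW_snd hz) key3
      have hmem : ((c'.head hc0, true) : E × Bool) ∈ negW q := by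
        rw [← hMN]
        refine List.mem_append.2 (Or.inr (List.mem_append.2 (Or.inl ?_)))
        simp only [posW, List.mem_map]
        exact ⟨c'.head hc0, List.head_mem hc0, rfl⟩
      have := mem_negW_snd hmem
      simp at this

end AuxFG

section AuxTopo
variable {A : Type*}


lemma cyl_inter {x : ℕ → Option A} {w1 w2 : List A} {F1 F2 : Finset A}
    (h1 : x ∈ Cyl w1 F1) (h2 : x ∈ Cyl w2 F2) (hle : w1.length ≤ w2.length) :
    ∃ w3 F3, x ∈ Cyl w3 F3 ∧ Cyl w3 F3 ⊆ Cyl w1 F1 ∩ Cyl w2 F2 := by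
  classical
  rcases eq_or_lt_of_le hle with heq | hlt
  · have hw : w1 = w2 := by
      apply List.ext_get heq
      intro i hi1 hi2
      have e1 := h1.1 i hi1
      have e2 := h2.1 i hi2
      rw [e1] at e2
      exact Option.some_injective _ e2
    subst hw
    refine ⟨w1, F1 ∪ F2, ⟨h1.1, ?_⟩, ?_⟩
    · intro a ha
      rcases Finset.mem_union.1 ha with ha | ha
      · exact h1.2 a ha
      · exact h2.2 a ha
    · rintro z ⟨hz1, hz2⟩
      exact ⟨⟨hz1, fun a ha => hz2 a (Finset.mem_union_left _ ha)⟩,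
        ⟨hz1, fun a ha => hz2 a (Finset.mem_union_right _ ha)⟩⟩
  · refine ⟨w2, F2, h2, ?_⟩
    rintro z ⟨hz1, hz2⟩
    refine ⟨⟨?_, ?_⟩, ⟨hz1, hz2⟩⟩
    · intro i hi
      have : i < w2.length := lt_trans hi hlt
      rw [hz1 i this]
      have e1 := h1.1 i hi
      have e2 := h2.1 i this
      rw [e1] at e2
      exact congrArg some (Option.some_injective _ e2).symm
    · intro a ha
      rw [hz1 w1.length hlt]
      intro hcon
      have e2 := h2.1 w1.length hlt
      have := h1.2 a ha
      rw [e2] at this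
      exact this (by rw [← Option.some_injective _ hcon])
lemma isBasis (A : Type*) : TopologicalSpace.IsTopologicalBasis
    {S : Set ↥(FullShift A) | ∃ w F, S = Subtype.val ⁻¹' Cyl w F} := by
  refine ⟨?_, ?_, rfl⟩
  · rintro t1 ⟨w1, F1, rfl⟩ t2 ⟨w2, F2, rfl⟩ x ⟨hx1, hx2⟩
    rcases le_total w1.length w2.length with hle | hle
    · obtain ⟨w3, F3, hx3, hsub⟩ := cyl_inter hx1 hx2 hle
      exact ⟨Subtype.val ⁻¹' Cyl w3 F3, ⟨w3, F3, rfl⟩, hx3,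
        fun z hz => ⟨(hsub hz).1, (hsub hz).2⟩⟩
    · obtain ⟨w3, F3, hx3, hsub⟩ := cyl_inter hx2 hx1 hle
      exact ⟨Subtype.val ⁻¹' Cyl w3 F3, ⟨w3, F3, rfl⟩, hx3,
        fun z hz => ⟨(hsub hz).2, (hsub hz).1⟩⟩
  · rw [Set.sUnion_eq_univ_iff]
    intro x
    refine ⟨Subtype.val ⁻¹' Cyl [] ∅, ⟨[], ∅, rfl⟩, ?_⟩
    exact ⟨by intro i hi; simp at hi, by simp⟩

lemma isOpen_cyl (w : List A) (F : Finset A) :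
    IsOpen (Subtype.val ⁻¹' Cyl w F : Set ↥(FullShift A)) :=
  (isBasis A).isOpen ⟨w, F, rfl⟩


end AuxTopo

section AuxUG
variable {V E : Type*} {G : Ultragraph V E}

lemma rng_nil : rng G ([] : List E) = Set.univ := rfl

lemma rng_ne_nil {l : List E} (h : l ≠ []) : rng G l = G.r (l.getLast h) := by
  rw [rng, List.getLast?_eq_getLast_of_ne_nil h]; rfl

lemma rng_append {u t : List E} (h : t ≠ []) : rng G (u ++ t) = rng G t := by
  rw [rng_ne_nil (by simp [h]), rng_ne_nil h, List.getLast_append_of_ne_nil _ h]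

lemma src_head_mem_rng {p t : List E}
    (hch : (p ++ t).Chain' (fun e f => G.s f ∈ G.r e)) (ht : t ≠ []) :
    G.s (t.head ht) ∈ rng G p := by
  cases p with
  | nil => rw [rng_nil]; trivial
  | cons e p' =>
      obtain ⟨-, -, hj⟩ := List.isChain_append.1 hch
      rw [rng_ne_nil (by simp : e :: p' ≠ [])]
      exact hj _ (List.getLast?_eq_getLast_of_ne_nil (by simp)) _ (List.head?_eq_head ht)

lemma theta_lt (a b : List E) (x : ℕ → Option E) {n : ℕ} (h : n < b.length) :
    theta a b x n = some (b.get ⟨n, h⟩) := dif_pos h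

lemma theta_ge (a b : List E) (x : ℕ → Option E) {n : ℕ} (h : b.length ≤ n) :
    theta a b x n = x (n - b.length + a.length) := dif_neg (by omega)

lemma finite_nrng (hfin : ∀ e : E, {f : E | G.s f ∉ G.r e}.Finite) (l : List E) :
    {f : E | G.s f ∉ rng G l}.Finite := by
  rcases eq_or_ne l [] with h | h
  · subst h
    have h2 : {f : E | G.s f ∉ rng G ([] : List E)} = ∅ := by
      ext f; simp [rng_nil]
    rw [h2]; exact Set.finite_empty
  · rw [rng_ne_nil h]
    exact hfin _

lemma finite_bad (hfin : ∀ e : E, {f : E | G.s f ∉ G.r e}.Finite) (a b : List E) :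
    {f : E | G.s f ∉ rng G a ∩ rng G b}.Finite := by
  refine Set.Finite.subset ((finite_nrng hfin a).union (finite_nrng hfin b)) ?_
  intro f hf
  simp only [Set.mem_setOf_eq, Set.mem_inter_iff, not_and_or] at hf
  exact hf

lemma theta_mem_Ginf {a b : List E} (hb : b = [] ∨ IsPath G b) {z : ℕ → Option E}
    (hz : z ∈ Ginf G) (hj : ∀ e, z a.length = some e → G.s e ∈ rng G b) :
    theta a b z ∈ Ginf G := by
  constructor
  · intro n
    by_cases h : n < b.length
    · rw [theta_lt _ _ _ h]; simp
    · rw [theta_ge _ _ _ (by omega)]; exact hz.1 _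
  · intro n e f he hf
    by_cases h1 : n + 1 < b.length
    · rw [theta_lt _ _ _ (by omega : n < b.length)] at he
      rw [theta_lt _ _ _ h1] at hf
      have hbp : IsPath G b := by
        rcases hb with h | h
        · subst h; simp at h1
        · exact h
      have hchain := List.isChain_iff_getElem.1 hbp.2 n (by omega)
      have he' := Option.some_injective _ he
      have hf' := Option.some_injective _ hf
      subst he'; subst hf'
      exact hchain
    · by_cases h2 : n + 1 = b.length
      · rw [theta_lt _ _ _ (by omega : n < b.length)] at he
        rw [theta_ge _ _ _ (by omega)] at hf
        have hb0 : b ≠ [] := by intro h; subst h; simp at h2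
        have hidx : n + 1 - b.length + a.length = a.length := by omega
        rw [hidx] at hf
        have hsf := hj f hf
        rw [rng_ne_nil hb0] at hsf
        have hgl : b.getLast hb0 = b.get ⟨n, by omega⟩ := by
          rw [List.getLast_eq_getElem]
          simp only [List.get_eq_getElem]
          congr 1
          omega
        have he' := Option.some_injective _ he
        have heq : e = b.getLast hb0 := by rw [hgl]; exact he'.symm
        rw [heq]
        exact hsf
      · have hge : b.length ≤ n := by omega
        rw [theta_ge _ _ _ hge] at he
        rw [theta_ge _ _ _ (by omega)] at hf
        have hidx : n + 1 - b.length + a.length = n - b.length + a.length + 1 := by omega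
        rw [hidx] at hf
        exact hz.2 _ _ _ he hf

end AuxUG

section AuxUG2
variable {V E : Type*} {G : Ultragraph V E}

lemma mem_edgeShift_iff {x : ↥(FullShift E)} :
    x ∈ edgeShift G ↔ ∀ w (F : Finset E), x.1 ∈ Cyl w F →
      ∃ z : ↥(FullShift E), z.1 ∈ Cyl w F ∧ z.1 ∈ Ginf G := by
  rw [edgeShift, (isBasis E).mem_closure_iff]
  constructor
  · intro h w F hx
    obtain ⟨z, hz1, hz2⟩ := h (Subtype.val ⁻¹' Cyl w F) ⟨w, F, rfl⟩ hx
    exact ⟨z, hz1, hz2⟩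
  · rintro h o ⟨w, F, rfl⟩ hx
    obtain ⟨z, hz1, hz2⟩ := h w F hx
    exact ⟨z, hz1, hz2⟩

lemma theta_mem_edgeShift (hfin : ∀ e : E, {f : E | G.s f ∉ G.r e}.Finite)
    {a b : List E} (hb : b = [] ∨ IsPath G b) {x : ↥(FullShift E)}
    (hxe : x ∈ edgeShift G)
    (hxa : ∀ i (h : i < a.length), x.1 i = some (a.get ⟨i, h⟩))
    (hsrc : ∀ e, x.1 a.length = some e → G.s e ∈ rng G a ∩ rng G b) :
    thetaF a b x ∈ edgeShift G := by
  classical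
  rw [mem_edgeShift_iff] at hxe ⊢
  intro w F hmem
  obtain ⟨hpre, hFc⟩ := hmem
  have hTx : ((thetaF a b x).1 : ℕ → Option E) = theta a b x.1 := rfl
  rw [hTx] at hpre hFc
  by_cases hwb : w.length ≤ b.length
  · -- short case: the cylinder word is a prefix of b
    have hwi : ∀ i (h : i < w.length),
        some (b.get ⟨i, lt_of_lt_of_le h hwb⟩) = some (w.get ⟨i, h⟩) := by
      intro i h
      rw [← theta_lt a b x.1 (lt_of_lt_of_le h hwb)]
      exact hpre i h
    set F0 : Finset E := if w.length = b.length then F else ∅ with hF0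
    have hxU : x.1 ∈ Cyl a ((finite_bad hfin a b).toFinset ∪ F0) := by
      refine ⟨hxa, ?_⟩
      intro f hf hcon
      rcases Finset.mem_union.1 hf with hf | hf
      · rw [Set.Finite.mem_toFinset] at hf
        exact hf (hsrc f hcon)
      · rw [hF0] at hf
        by_cases hwe : w.length = b.length
        · rw [if_pos hwe] at hf
          apply hFc f hf
          rw [theta_ge a b x.1 (by omega : b.length ≤ w.length)]
          have hidx2 : w.length - b.length + a.length = a.length := by omega
          rw [hidx2]
          exact hcon
        · rw [if_neg hwe] at hf
          simp at hf
    obtain ⟨z, hzU, hzG⟩ := hxe a _ hxU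
    have hjz : ∀ e, z.1 a.length = some e → G.s e ∈ rng G a ∩ rng G b := by
      intro e he
      by_contra hcon
      exact hzU.2 e (Finset.mem_union_left _
        ((finite_bad hfin a b).mem_toFinset.2 hcon)) he
    refine ⟨thetaF a b z, ⟨?_, ?_⟩, theta_mem_Ginf hb hzG (fun e he => (hjz e he).2)⟩
    · intro i h
      rw [show (thetaF a b z).1 = theta a b z.1 from rfl,
        theta_lt a b z.1 (lt_of_lt_of_le h hwb)]
      exact hwi i h
    · intro f hf
      by_cases hwe : w.length = b.length
      · rw [show (thetaF a b z).1 = theta a b z.1 from rfl,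
          theta_ge a b z.1 (le_of_eq hwe.symm)]
        have hidx : w.length - b.length + a.length = a.length := by omega
        rw [hidx]
        exact hzU.2 f (Finset.mem_union_right _ (by rw [hF0, if_pos hwe]; exact hf))
      · have hlt : w.length < b.length := by omega
        rw [show (thetaF a b z).1 = theta a b z.1 from rfl, theta_lt a b z.1 hlt]
        have := hFc f hf
        rw [theta_lt a b x.1 hlt] at this
        exact this
  · -- long case: w extends b
    have hwb' : b.length < w.length := by omega
    have hdl : (w.drop b.length).length = w.length - b.length := by simp
    have hxpin : ∀ j (h : j < w.length - b.length),
        x.1 (a.length + j) = some (w.get ⟨b.length + j, by omega⟩) := by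
      intro j h
      have := hpre (b.length + j) (by omega)
      rw [theta_ge a b x.1 (by omega)] at this
      have hidx : b.length + j - b.length + a.length = a.length + j := by omega
      rw [hidx] at this
      exact this
    have hxU : x.1 ∈ Cyl (a ++ w.drop b.length) F := by
      constructor
      · intro i h
        rw [List.length_append, hdl] at h
        by_cases hia : i < a.length
        · rw [hxa i hia]
          congr 1
          simp only [List.get_eq_getElem]
          rw [List.getElem_append_left hia]
        · have hj : i - a.length < w.length - b.length := by omega
          have := hxpin (i - a.length) hj
          have hidx : a.length + (i - a.length) = i := by omega
          rw [hidx] at this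
          rw [this]
          congr 1
          simp only [List.get_eq_getElem]
          rw [List.getElem_append_right (by omega : a.length ≤ i)]
          simp only [List.getElem_drop]
          try congr 1
          try omega
      · intro f hf
        have := hFc f hf
        rw [theta_ge a b x.1 (by omega)] at this
        have hidx : w.length - b.length + a.length =
            (a ++ w.drop b.length).length := by
          rw [List.length_append, hdl]; omega
        rw [hidx] at this
        exact this
    obtain ⟨z, hzU, hzG⟩ := hxe _ F hxU
    have hzpin : ∀ j (h : j < w.length - b.length),
        z.1 (a.length + j) = some (w.get ⟨b.length + j, by omega⟩) := by
      intro j h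
      have h2 : a.length + j < (a ++ w.drop b.length).length := by
        rw [List.length_append, hdl]; omega
      have := hzU.1 (a.length + j) h2
      rw [this]
      congr 1
      simp only [List.get_eq_getElem]
      rw [List.getElem_append_right (by omega : a.length ≤ a.length + j)]
      simp only [List.getElem_drop]
      try congr 1
      try omega
    have hjz : ∀ e, z.1 a.length = some e → G.s e ∈ rng G b := by
      intro e he
      have := hzpin 0 (by omega)
      rw [Nat.add_zero] at this
      rw [this] at he
      have he' := Option.some_injective _ he
      -- x also pins this letter, so the source condition applies
      have hx0 := hxpin 0 (by omega)
      rw [Nat.add_zero] at hx0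
      have := hsrc _ hx0
      rw [he'] at this
      exact this.2
    refine ⟨thetaF a b z, ⟨?_, ?_⟩, theta_mem_Ginf hb hzG hjz⟩
    · intro i h
      by_cases hib : i < b.length
      · rw [show (thetaF a b z).1 = theta a b z.1 from rfl, theta_lt a b z.1 hib]
        rw [← theta_lt a b x.1 hib]
        exact hpre i h
      · rw [show (thetaF a b z).1 = theta a b z.1 from rfl,
          theta_ge a b z.1 (by omega)]
        have hj : i - b.length < w.length - b.length := by omega
        have := hzpin (i - b.length) hj
        have hidx : i - b.length + a.length = a.length + (i - b.length) := by omega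
        rw [hidx, this]
        congr 1
        simp only [List.get_eq_getElem]
        congr 1
        omega
    · intro f hf
      rw [show (thetaF a b z).1 = theta a b z.1 from rfl,
        theta_ge a b z.1 (by omega)]
      have hidx : w.length - b.length + a.length =
          (a ++ w.drop b.length).length := by
        rw [List.length_append, hdl]; omega
      rw [hidx]
      exact hzU.2 f hf

end AuxUG2

section AuxMain
variable {V E : Type*} {G : Ultragraph V E}

lemma validPair_symm {a b : List E} (h : ValidPair G a b) : ValidPair G b a :=
  ⟨h.2.1, h.1, by rw [Set.inter_comm]; exact h.2.2.1, fun hb ha => (h.2.2.2 ha hb).symm⟩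

lemma thetaF_mapsTo (hfin : ∀ e : E, {f : E | G.s f ∉ G.r e}.Finite)
    {a b : List E} (hvp : ValidPair G a b)
    {x : ↥(FullShift E)} (hx : x ∈ XwS G a b) : thetaF a b x ∈ XwS G b a := by
  obtain ⟨hxe, hxa, hsrc⟩ := hx
  refine ⟨theta_mem_edgeShift hfin hvp.2.1 hxe hxa hsrc, ?_, ?_⟩
  · intro i h; exact theta_lt a b x.1 h
  · intro e he
    rw [show ((thetaF a b x).1 : ℕ → Option E) = theta a b x.1 from rfl,
      theta_ge a b x.1 (le_refl _)] at he
    have hidx : b.length - b.length + a.length = a.length := by omega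
    rw [hidx] at he
    exact ⟨(hsrc e he).2, (hsrc e he).1⟩

lemma theta_theta {a b : List E} {x : ℕ → Option E}
    (hxa : ∀ i (h : i < a.length), x i = some (a.get ⟨i, h⟩)) :
    theta b a (theta a b x) = x := by
  funext n
  by_cases h : n < a.length
  · rw [theta_lt b a _ h]
    exact (hxa n h).symm
  · rw [theta_ge b a _ (by omega), theta_ge a b x (by omega)]
    congr 1
    omega

lemma continuous_thetaF (hfin : ∀ e : E, {f : E | G.s f ∉ G.r e}.Finite)
    {a b : List E} (hvp : ValidPair G a b) :
    Continuous (fun x : ↥(XwS G a b) =>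
      (⟨thetaF a b x.1, thetaF_mapsTo hfin hvp x.2⟩ : ↥(XwS G b a))) := by
  apply Continuous.subtype_mk
  rw [(isBasis E).continuous_iff]
  rintro S ⟨w, F, rfl⟩
  by_cases hwb : w.length ≤ b.length
  · by_cases hmatch : ∀ i (h : i < w.length), w.get ⟨i, h⟩ = b.get ⟨i, lt_of_lt_of_le h hwb⟩
    · rcases eq_or_lt_of_le hwb with heq | hlt
      · -- |w| = |b| : preimage is the cylinder over a
        have hset : ((fun x : ↥(XwS G a b) => thetaF a b x.1) ⁻¹' (Subtype.val ⁻¹' Cyl w F))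
            = Subtype.val ⁻¹' (Subtype.val ⁻¹' Cyl a F : Set ↥(FullShift E)) := by
          ext x
          obtain ⟨-, hxa, -⟩ := x.2
          simp only [Set.mem_preimage]
          constructor
          · rintro ⟨-, hF⟩
            refine ⟨hxa, ?_⟩
            intro f hf
            have := hF f hf
            rw [show ((thetaF a b x.1).1 : ℕ → Option E) = theta a b x.1.1 from rfl,
              theta_ge a b x.1.1 heq.ge, heq] at this
            have hidx : b.length - b.length + a.length = a.length := by omega
            rwa [hidx] at this
          · rintro ⟨-, hF⟩
            constructor
            · intro i h
              rw [show ((thetaF a b x.1).1 : ℕ → Option E) = theta a b x.1.1 from rfl,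
                theta_lt a b x.1.1 (lt_of_lt_of_le h hwb)]
              rw [hmatch i h]
            · intro f hf
              rw [show ((thetaF a b x.1).1 : ℕ → Option E) = theta a b x.1.1 from rfl,
                theta_ge a b x.1.1 heq.ge, heq]
              have hidx : b.length - b.length + a.length = a.length := by omega
              rw [hidx]
              exact hF f hf
        rw [hset]
        exact (isOpen_cyl a F).preimage continuous_subtype_val
      · -- |w| < |b|
        by_cases hbF : b.get ⟨w.length, hlt⟩ ∈ F
        · have hset : ((fun x : ↥(XwS G a b) => thetaF a b x.1) ⁻¹' (Subtype.val ⁻¹' Cyl w F))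
              = ∅ := by
            ext x
            simp only [Set.mem_preimage, Set.mem_empty_iff_false, iff_false]
            rintro ⟨-, hF⟩
            exact hF _ hbF (theta_lt a b x.1.1 hlt)
          rw [hset]; exact isOpen_empty
        · have hset : ((fun x : ↥(XwS G a b) => thetaF a b x.1) ⁻¹' (Subtype.val ⁻¹' Cyl w F))
              = Set.univ := by
            ext x
            simp only [Set.mem_preimage, Set.mem_univ, iff_true]
            constructor
            · intro i h
              rw [show ((thetaF a b x.1).1 : ℕ → Option E) = theta a b x.1.1 from rfl,
                theta_lt a b x.1.1 (lt_of_lt_of_le h hwb), hmatch i h]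
            · intro f hf hcon
              rw [show ((thetaF a b x.1).1 : ℕ → Option E) = theta a b x.1.1 from rfl,
                theta_lt a b x.1.1 hlt] at hcon
              rw [Option.some_injective _ hcon] at hbF
              exact hbF hf
          rw [hset]; exact isOpen_univ
    · -- mismatch: empty
      push_neg at hmatch
      obtain ⟨i, hi, hne⟩ := hmatch
      have hset : ((fun x : ↥(XwS G a b) => thetaF a b x.1) ⁻¹' (Subtype.val ⁻¹' Cyl w F))
          = ∅ := by
        ext x
        simp only [Set.mem_preimage, Set.mem_empty_iff_false, iff_false]
        rintro ⟨hpre, -⟩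
        have := hpre i hi
        rw [show ((thetaF a b x.1).1 : ℕ → Option E) = theta a b x.1.1 from rfl,
          theta_lt a b x.1.1 (lt_of_lt_of_le hi hwb)] at this
        exact hne (Option.some_injective _ this).symm
      rw [hset]; exact isOpen_empty
  · have hwb' : b.length < w.length := by omega
    by_cases hmatch : ∀ i (h : i < b.length), w.get ⟨i, by omega⟩ = b.get ⟨i, h⟩
    · have hset : ((fun x : ↥(XwS G a b) => thetaF a b x.1) ⁻¹' (Subtype.val ⁻¹' Cyl w F))
          = Subtype.val ⁻¹' (Subtype.val ⁻¹' Cyl (a ++ w.drop b.length) F : Set ↥(FullShift E)) := by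
        ext x
        obtain ⟨-, hxa, -⟩ := x.2
        have hdl : (w.drop b.length).length = w.length - b.length := by simp
        simp only [Set.mem_preimage]
        constructor
        · rintro ⟨hpre, hF⟩
          constructor
          · intro i h
            rw [List.length_append, hdl] at h
            by_cases hia : i < a.length
            · rw [hxa i hia]
              congr 1
              simp only [List.get_eq_getElem]
              rw [List.getElem_append_left hia]
            · have := hpre (b.length + (i - a.length)) (by omega)
              rw [show ((thetaF a b x.1).1 : ℕ → Option E) = theta a b x.1.1 from rfl,
                theta_ge a b x.1.1 (by omega)] at this
              have hidx : b.length + (i - a.length) - b.length + a.length = i := by omega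
              rw [hidx] at this
              rw [this]
              congr 1
              simp only [List.get_eq_getElem]
              rw [List.getElem_append_right (by omega : a.length ≤ i)]
              simp only [List.getElem_drop]
              try congr 1
              try omega
          · intro f hf
            have := hF f hf
            rw [show ((thetaF a b x.1).1 : ℕ → Option E) = theta a b x.1.1 from rfl,
              theta_ge a b x.1.1 (by omega)] at this
            have hidx : w.length - b.length + a.length = (a ++ w.drop b.length).length := by
              rw [List.length_append, hdl]; omega
            rwa [hidx] at this
        · rintro ⟨hpre, hF⟩
          constructor
          · intro i h
            by_cases hib : i < b.length
            · rw [show ((thetaF a b x.1).1 : ℕ → Option E) = theta a b x.1.1 from rfl,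
                theta_lt a b x.1.1 hib, hmatch i hib]
            · rw [show ((thetaF a b x.1).1 : ℕ → Option E) = theta a b x.1.1 from rfl,
                theta_ge a b x.1.1 (by omega)]
              have h2 : i - b.length + a.length < (a ++ w.drop b.length).length := by
                rw [List.length_append, hdl]; omega
              rw [hpre _ h2]
              congr 1
              simp only [List.get_eq_getElem]
              rw [List.getElem_append_right (by omega : a.length ≤ i - b.length + a.length)]
              simp only [List.getElem_drop]
              congr 1
              omega
          · intro f hf
            rw [show ((thetaF a b x.1).1 : ℕ → Option E) = theta a b x.1.1 from rfl,
              theta_ge a b x.1.1 (by omega)]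
            have hidx : w.length - b.length + a.length = (a ++ w.drop b.length).length := by
              rw [List.length_append, hdl]; omega
            rw [hidx]
            exact hF f hf
      rw [hset]
      exact (isOpen_cyl _ F).preimage continuous_subtype_val
    · push_neg at hmatch
      obtain ⟨i, hi, hne⟩ := hmatch
      have hset : ((fun x : ↥(XwS G a b) => thetaF a b x.1) ⁻¹' (Subtype.val ⁻¹' Cyl w F))
          = ∅ := by
        ext x
        simp only [Set.mem_preimage, Set.mem_empty_iff_false, iff_false]
        rintro ⟨hpre, -⟩
        have := hpre i (by omega)
        rw [show ((thetaF a b x.1).1 : ℕ → Option E) = theta a b x.1.1 from rfl,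
          theta_lt a b x.1.1 hi] at this
        exact hne (Option.some_injective _ this).symm
      rw [hset]; exact isOpen_empty

end AuxMain

section AuxParts
variable {V E : Type*} {G : Ultragraph V E}

lemma part2 (hfin : ∀ e : E, {f : E | G.s f ∉ G.r e}.Finite)
    {a b c d p q : List E} (hab : ValidPair G a b) (hcd : ValidPair G c d)
    (hpq : ValidPair G p q) (heq : pf a b * pf c d = pf p q)
    {x : ↥(FullShift E)} (h1 : x ∈ XwS G b a) (h2 : x ∈ XwS G c d) :
    thetaF b a x ∈ XwS G p q := by
  obtain ⟨hxe, hxb, hsrc1⟩ := h1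
  obtain ⟨-, hxc, hsrc2⟩ := h2
  have hes : thetaF b a x ∈ edgeShift G := theta_mem_edgeShift hfin hab.1 hxe hxb hsrc1
  have hat : ∀ e, x.1 b.length = some e → G.s e ∈ rng G b ∩ rng G a := hsrc1
  rcases classify hab.2.2.2 hcd.2.2.2 hpq.2.2.2 heq with
    ⟨t, ht, hbct, hpa, hqdt⟩ | ⟨t, ht, hcbt, hpat, hqd⟩ | ⟨hbc, t, hapt, hdqt⟩
  · -- case (i): b = c ++ t, p = a, q = d ++ t
    subst hpa; subst hqdt; subst hbct
    refine ⟨hes, ?_, ?_⟩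
    · intro i h; exact theta_lt (c ++ t) p x.1 h
    · intro e he
      rw [show ((thetaF (c ++ t) p x).1 : ℕ → Option E) = theta (c ++ t) p x.1 from rfl,
        theta_ge (c ++ t) p x.1 (le_refl _)] at he
      have hidx : p.length - p.length + (c ++ t).length = (c ++ t).length := by omega
      rw [hidx] at he
      have hs1 := hsrc1 e he
      refine ⟨hs1.2, ?_⟩
      rw [rng_append ht]
      rw [rng_append ht] at hs1
      exact hs1.1
  · -- case (ii): c = b ++ t, p = a ++ t, q = d
    subst hcbt; subst hpat; subst hqd
    refine ⟨hes, ?_, ?_⟩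
    · intro i h
      rw [List.length_append] at h
      by_cases hia : i < a.length
      · rw [show ((thetaF b a x).1 : ℕ → Option E) = theta b a x.1 from rfl,
          theta_lt b a x.1 hia]
        congr 1
        simp only [List.get_eq_getElem]
        rw [List.getElem_append_left hia]
      · rw [show ((thetaF b a x).1 : ℕ → Option E) = theta b a x.1 from rfl,
          theta_ge b a x.1 (show a.length ≤ i by omega)]
        have h2 : i - a.length + b.length < (b ++ t).length := by
          rw [List.length_append]; omega
        rw [hxc _ h2]
        congr 1
        simp only [List.get_eq_getElem]
        rw [List.getElem_append_right (show b.length ≤ i - a.length + b.length by omega),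
          List.getElem_append_right (show a.length ≤ i by omega)]
        congr 1
        omega
    · intro e he
      rw [show ((thetaF b a x).1 : ℕ → Option E) = theta b a x.1 from rfl,
        theta_ge b a x.1 (show a.length ≤ (a ++ t).length by
          rw [List.length_append]; omega)] at he
      have hidx : (a ++ t).length - a.length + b.length = (b ++ t).length := by
        simp only [List.length_append]; omega
      rw [hidx] at he
      have hs2 := hsrc2 e he
      refine ⟨?_, hs2.2⟩
      rw [rng_append ht]
      rw [rng_append ht] at hs2
      exact hs2.1
  · -- case (iii): b = c (b eliminated), a = p ++ t, d = q ++ t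
    subst hbc; subst hapt; subst hdqt
    refine ⟨hes, ?_, ?_⟩
    · intro i h
      rw [show ((thetaF b (p ++ t) x).1 : ℕ → Option E) = theta b (p ++ t) x.1 from rfl,
        theta_lt b (p ++ t) x.1 (show i < (p ++ t).length by
          rw [List.length_append]; omega)]
      congr 1
      simp only [List.get_eq_getElem]
      rw [List.getElem_append_left h]
    · intro e he
      by_cases ht0 : t = []
      · subst ht0
        rw [show ((thetaF b (p ++ ([] : List E)) x).1 : ℕ → Option E)
            = theta b (p ++ ([] : List E)) x.1 from rfl,
          theta_ge b (p ++ ([] : List E)) x.1 (show (p ++ ([] : List E)).length ≤ p.length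
            by simp)] at he
        have hidx : p.length - (p ++ ([] : List E)).length + b.length = b.length := by
          simp
        rw [hidx] at he
        have hs1 := hsrc1 e he
        have hs2 := hsrc2 e he
        constructor
        · have hr : rng G (p ++ ([] : List E)) = rng G p := by rw [List.append_nil]
          rw [← hr]; exact hs1.2
        · have hr : rng G (q ++ ([] : List E)) = rng G q := by rw [List.append_nil]
          rw [← hr]; exact hs2.2
      · rw [show ((thetaF b (p ++ t) x).1 : ℕ → Option E) = theta b (p ++ t) x.1 from rfl,
          theta_lt b (p ++ t) x.1 (show p.length < (p ++ t).length by
            rw [List.length_append]; have := List.length_pos_iff.2 ht0; omega)] at he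
        have he' := Option.some_injective _ he
        have heh : e = t.head ht0 := by
          rw [← he']
          simp only [List.get_eq_getElem]
          rw [List.getElem_append_right (le_refl _), List.head_eq_getElem]
          congr 1
          omega
        subst heh
        have hpa : IsPath G (p ++ t) := by
          rcases hab.1 with h | h
          · exact absurd h (by simp [ht0])
          · exact h
        have hpd : IsPath G (q ++ t) := by
          rcases hcd.2.1 with h | h
          · exact absurd h (by simp [ht0])
          · exact h
        exact ⟨src_head_mem_rng hpa.2 ht0, src_head_mem_rng hpd.2 ht0⟩

lemma part3 {a b c d p q : List E} (hab : ValidPair G a b) (hcd : ValidPair G c d)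
    (hpq : ValidPair G p q) (heq : pf a b * pf c d = pf p q)
    {x : ↥(FullShift E)} (h1 : x ∈ XwS G q p) (h2 : x ∈ XwS G d c) :
    thetaF b a (thetaF d c x) = thetaF q p x := by
  obtain ⟨-, hxq, -⟩ := h1
  obtain ⟨-, hxd, -⟩ := h2
  apply Subtype.ext
  funext n
  show theta b a (theta d c x.1) n = theta q p x.1 n
  rcases classify hab.2.2.2 hcd.2.2.2 hpq.2.2.2 heq with
    ⟨t, ht, hbct, hpa, hqdt⟩ | ⟨t, ht, hcbt, hpat, hqd⟩ | ⟨hbc, t, hapt, hdqt⟩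
  · -- case (i): b = c ++ t, p = a, q = d ++ t
    subst hpa; subst hqdt; subst hbct
    by_cases h : n < p.length
    · rw [theta_lt (c ++ t) p _ h, theta_lt (d ++ t) p x.1 h]
    · rw [theta_ge (c ++ t) p _ (show p.length ≤ n by omega),
        theta_ge (d ++ t) p x.1 (show p.length ≤ n by omega),
        theta_ge d c x.1 (show c.length ≤ n - p.length + (c ++ t).length by
          rw [List.length_append]; omega)]
      exact congrArg _ (by simp only [List.length_append]; omega)
  · -- case (ii): c = b ++ t, p = a ++ t, q = d
    subst hcbt; subst hpat; subst hqd
    by_cases h : n < a.length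
    · rw [theta_lt b a _ h,
        theta_lt q (a ++ t) x.1 (show n < (a ++ t).length by
          rw [List.length_append]; omega)]
      congr 1
      simp only [List.get_eq_getElem]
      rw [List.getElem_append_left h]
    · by_cases h2 : n < a.length + t.length
      · rw [theta_ge b a _ (show a.length ≤ n by omega),
          theta_lt q (a ++ t) x.1 (show n < (a ++ t).length by
            rw [List.length_append]; omega),
          theta_lt q (b ++ t) x.1 (show n - a.length + b.length < (b ++ t).length by
            rw [List.length_append]; omega)]
        congr 1
        simp only [List.get_eq_getElem]
        rw [List.getElem_append_right (show b.length ≤ n - a.length + b.length by omega),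
          List.getElem_append_right (show a.length ≤ n by omega)]
        congr 1
        omega
      · rw [theta_ge b a _ (show a.length ≤ n by omega),
          theta_ge q (a ++ t) x.1 (show (a ++ t).length ≤ n by
            rw [List.length_append]; omega),
          theta_ge q (b ++ t) x.1 (show (b ++ t).length ≤ n - a.length + b.length by
            rw [List.length_append]; omega)]
        exact congrArg _ (by simp only [List.length_append]; omega)
  · -- case (iii): b = c (b eliminated), a = p ++ t, d = q ++ t
    subst hbc; subst hapt; subst hdqt
    by_cases h : n < p.length
    · rw [theta_lt b (p ++ t) _ (show n < (p ++ t).length by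
          rw [List.length_append]; omega),
        theta_lt q p x.1 h]
      congr 1
      simp only [List.get_eq_getElem]
      rw [List.getElem_append_left h]
    · by_cases h2 : n < p.length + t.length
      · rw [theta_lt b (p ++ t) _ (show n < (p ++ t).length by
            rw [List.length_append]; omega),
          theta_ge q p x.1 (show p.length ≤ n by omega)]
        have hlen : n - p.length + q.length < (q ++ t).length := by
          rw [List.length_append]; omega
        rw [hxd _ hlen]
        congr 1
        simp only [List.get_eq_getElem]
        rw [List.getElem_append_right (show p.length ≤ n by omega),
          List.getElem_append_right (show q.length ≤ n - p.length + q.length by omega)]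
        congr 1
        omega
      · rw [theta_ge b (p ++ t) _ (show (p ++ t).length ≤ n by
            rw [List.length_append]; omega),
          theta_ge q p x.1 (show p.length ≤ n by omega),
          theta_ge (q ++ t) b x.1 (show b.length ≤ n - (p ++ t).length + b.length by omega)]
        exact congrArg _ (by simp only [List.length_append]; omega)

end AuxParts


/-- the maps `θ_g : X_{g⁻¹} → X_g` (here `g = ba⁻¹` is represented by the
pair of positive words `(b, a)`) are homeomorphisms, and the family `(X_g, θ_g)` satisfies
the partial-action conditions `θ_g(X_{g⁻¹} ∩ X_h) ⊆ X_{gh}` and `θ_g ∘ θ_h = θ_{gh}` on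
`X_{(gh)⁻¹} ∩ X_{h⁻¹}`. -/
theorem partialAction_of_ultragraph {V E : Type*} [Countable V] [Countable E] [Infinite E]
    (G : Ultragraph V E) (hr : ∀ e, (G.r e).Nonempty)
    (hfin : ∀ e : E, {f : E | G.s f ∉ G.r e}.Finite) :
    (∀ a b : List E, ValidPair G a b →
      ∃ f : ↥(XwS G a b) → ↥(XwS G b a),
        (∀ x : ↥(XwS G a b), (f x).1 = thetaF a b x.1) ∧
        Continuous f ∧ Function.Bijective f ∧ IsOpenMap f) ∧
    (∀ a b c d p q : List E, ValidPair G a b → ValidPair G c d → ValidPair G p q →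
      pf a b * pf c d = pf p q →
      thetaF b a '' {x : ↥(FullShift E) | x ∈ XwS G b a ∧ x ∈ XwS G c d} ⊆ XwS G p q) ∧
    (∀ a b c d p q : List E, ValidPair G a b → ValidPair G c d → ValidPair G p q →
      pf a b * pf c d = pf p q →
      ∀ x : ↥(FullShift E), x ∈ XwS G q p → x ∈ XwS G d c →
        thetaF b a (thetaF d c x) = thetaF q p x) := by
  refine ⟨?_, ?_, ?_⟩
  · -- Part 1: homeomorphisms
    intro a b hvp
    set f : ↥(XwS G a b) → ↥(XwS G b a) :=
      fun x => ⟨thetaF a b x.1, thetaF_mapsTo hfin hvp x.2⟩ with hf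
    set g : ↥(XwS G b a) → ↥(XwS G a b) :=
      fun y => ⟨thetaF b a y.1, thetaF_mapsTo hfin (validPair_symm hvp) y.2⟩ with hg
    have hgf : ∀ x, g (f x) = x := by
      intro x
      apply Subtype.ext; apply Subtype.ext
      exact theta_theta x.2.2.1
    have hfg : ∀ y, f (g y) = y := by
      intro y
      apply Subtype.ext; apply Subtype.ext
      exact theta_theta y.2.2.1
    refine ⟨f, fun x => rfl, continuous_thetaF hfin hvp,
      Function.bijective_iff_has_inverse.2 ⟨g, hgf, hfg⟩, ?_⟩
    intro U hU
    have himg : f '' U = g ⁻¹' U := by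
      ext y
      constructor
      · rintro ⟨x, hx, rfl⟩
        show g (f x) ∈ U
        rw [hgf x]; exact hx
      · intro hy
        exact ⟨g y, hy, hfg y⟩
    rw [himg]
    exact (continuous_thetaF hfin (validPair_symm hvp)).isOpen_preimage U hU
  · -- Part 2: θ_g (X_{g⁻¹} ∩ X_h) ⊆ X_{gh}
    intro a b c d p q hab hcd hpq heq
    rintro y ⟨x, ⟨h1, h2⟩, rfl⟩
    exact part2 hfin hab hcd hpq heq h1 h2
  · -- Part 3: θ_g ∘ θ_h = θ_{gh} on the common domain
    intro a b c d p q hab hcd hpq heq x h1 h2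
    exact part3 hab hcd hpq heq h1 h2

end OTW
end

section
/- Let G⁰ = {v_i : i ∈ ℕ} and consider the map ∂ : ⨁_{i∈ℕ} ℤ → Fun(G⁰, ℤ) determined by ∂(δ_{v_1}) = δ_{v_1} − χ_{G⁰∖{v_1,v_2}} and ∂(δ_{v_j}) = δ_{v_j} − χ_{G⁰} for j ≥ 2, where δ_v is the indicator function of {v} and χ_S of S, and the codomain is the ℤ-module generated by {δ_v} ∪ {χ_{G⁰}, χ_{G⁰∖{v_1,v_2}}}. Then coker(∂) ≅ ℤ ⊕ ℤ/2ℤ. -/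
namespace OTW

variable {A : Type*}

/-- `δ_{v_i}`, the indicator of the vertex `i` (vertices `v_1, v_2, …` are indexed by
`0, 1, …`). -/
def vdelta (i : ℕ) : ℕ → ℤ := fun n => if n = i then 1 else 0

/-- `χ_{G⁰ ∖ {v_1, v_2}}`. -/
def chiTail : ℕ → ℤ := fun n => if n = 0 ∨ n = 1 then 0 else 1

/-- The subgroup `Z_G` generated by the `δ_v` together with `χ_{G⁰}` and
`χ_{G⁰ ∖ {v_1, v_2}}`. -/
def ZG : Submodule ℤ (ℕ → ℤ) :=
  Submodule.span ℤ (Set.range vdelta ∪ {(fun _ => (1 : ℤ)), chiTail})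

theorem vdelta_mem_ZG (i : ℕ) : vdelta i ∈ ZG :=
  Submodule.subset_span (Or.inl ⟨i, rfl⟩)

theorem one_mem_ZG : (fun _ => (1 : ℤ)) ∈ ZG :=
  Submodule.subset_span (Or.inr (by left; rfl))

theorem chiTail_mem_ZG : chiTail ∈ ZG :=
  Submodule.subset_span (Or.inr (by right; rfl))

/-- The images of the generators: `∂δ_{v_1} = δ_{v_1} − χ_{G⁰∖{v_1,v_2}}` and
`∂δ_{v_j} = δ_{v_j} − χ_{G⁰}` for `j ≥ 2`. -/
noncomputable def dgen : ℕ → ↥ZG := fun i =>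
  if i = 0 then ⟨vdelta 0 - chiTail, sub_mem (vdelta_mem_ZG 0) chiTail_mem_ZG⟩
  else ⟨vdelta i - fun _ => 1, sub_mem (vdelta_mem_ZG i) one_mem_ZG⟩

/-- The map `∂ : ⨁_{i∈ℕ} ℤ → Z_G`. -/
noncomputable def bdry : (ℕ →₀ ℤ) →ₗ[ℤ] ↥ZG := Finsupp.lift ↥ZG ℤ ℕ dgen

/-- Auxiliary: the map `(c, a) ↦ Σ cᵢ δᵢ + a·𝟙`. -/
noncomputable def psi0 : ((ℕ →₀ ℤ) × ℤ) →ₗ[ℤ] (ℕ → ℤ) where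
  toFun p := fun n => p.1 n + p.2
  map_add' p q := by funext n; simp; ring
  map_smul' r p := by funext n; simp [smul_eq_mul]; ring

theorem psi0_apply (c : ℕ →₀ ℤ) (a : ℤ) (n : ℕ) : psi0 (c, a) n = c n + a := rfl

theorem psi0_inj : Function.Injective psi0 := by
  rw [injective_iff_map_eq_zero]
  rintro ⟨c, a⟩ hp
  obtain ⟨n, hn⟩ := Infinite.exists_notMem_finset c.support
  have hn0 : c n = 0 := Finsupp.notMem_support_iff.mp hn
  have ha : a = 0 := by
    have := congrFun hp n
    simpa [psi0_apply, hn0] using this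
  have hc : c = 0 := by
    ext m
    have := congrFun hp m
    simpa [psi0_apply, ha] using this
  simp [hc, ha, Prod.ext_iff]

theorem psi0_single (i : ℕ) (b : ℤ) : psi0 (Finsupp.single i b, 0) = b • vdelta i := by
  funext n
  rcases eq_or_ne n i with h | h
  · subst h; simp [psi0_apply, vdelta]
  · simp [psi0_apply, vdelta, Finsupp.single_eq_of_ne (Ne.symm h), h]

theorem psi0_fin_mem (c : ℕ →₀ ℤ) : psi0 (c, 0) ∈ ZG := by
  induction c using Finsupp.induction with
  | zero =>
      have : psi0 ((0 : ℕ →₀ ℤ), (0 : ℤ)) = 0 := by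
        funext n; simp [psi0_apply]
      rw [this]; exact Submodule.zero_mem ZG
  | single_add i b f hif hb ih =>
      have h2 : psi0 (Finsupp.single i b + f, 0) =
          psi0 (Finsupp.single i b, 0) + psi0 (f, 0) := by
        rw [← map_add]; norm_num
      rw [h2, psi0_single]
      exact add_mem (Submodule.smul_mem _ _ (vdelta_mem_ZG i)) ih

theorem psi0_range : LinearMap.range psi0 = ZG := by
  apply le_antisymm
  · rintro _ ⟨⟨c, a⟩, rfl⟩
    have h1 : psi0 (c, a) = psi0 (c, 0) + a • (fun _ => (1 : ℤ)) := by
      funext n; simp [psi0_apply]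
    rw [h1]
    exact add_mem (psi0_fin_mem c) (Submodule.smul_mem _ _ one_mem_ZG)
  · rw [ZG, Submodule.span_le]
    rintro x hx
    simp only [Set.mem_union, Set.mem_range, Set.mem_insert_iff, Set.mem_singleton_iff] at hx
    rcases hx with ⟨i, rfl⟩ | rfl | rfl
    · exact ⟨(Finsupp.single i 1, 0), by rw [psi0_single, one_smul]⟩
    · exact ⟨(0, 1), by funext n; simp [psi0_apply]⟩
    · refine ⟨(Finsupp.single 0 (-1) + Finsupp.single 1 (-1), 1), ?_⟩
      funext n
      simp only [psi0_apply, Finsupp.add_apply, Finsupp.single_apply, chiTail]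
      split_ifs <;> omega

/-- The linear equivalence `(ℕ →₀ ℤ) × ℤ ≃ₗ Z_G`. -/
noncomputable def psiEquiv : ((ℕ →₀ ℤ) × ℤ) ≃ₗ[ℤ] ↥ZG :=
  (LinearEquiv.ofInjective psi0 psi0_inj).trans (LinearEquiv.ofEq _ _ psi0_range)

theorem psiEquiv_coe (p : (ℕ →₀ ℤ) × ℤ) : (psiEquiv p : ℕ → ℤ) = psi0 p := rfl

/-- The preimages under `psiEquiv` of the generators `dgen`. -/
noncomputable def gg : ℕ → (ℕ →₀ ℤ) × ℤ := fun i =>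
  if i = 0 then (Finsupp.single 0 2 + Finsupp.single 1 1, -1) else (Finsupp.single i 1, -1)

theorem gg_zero : gg 0 = (Finsupp.single 0 2 + Finsupp.single 1 1, -1) := rfl

theorem gg_ne (i : ℕ) (hi : i ≠ 0) : gg i = (Finsupp.single i 1, -1) := by simp [gg, hi]

theorem dgen_zero : (dgen 0 : ℕ → ℤ) = vdelta 0 - chiTail := rfl

theorem dgen_ne (i : ℕ) (hi : i ≠ 0) : (dgen i : ℕ → ℤ) = vdelta i - fun _ => 1 := by
  simp [dgen, hi]

theorem psiEquiv_gg (i : ℕ) : psiEquiv (gg i) = dgen i := by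
  apply Subtype.ext
  rw [psiEquiv_coe]
  rcases eq_or_ne i 0 with rfl | hi
  · rw [gg_zero, dgen_zero]
    funext n
    simp only [psi0_apply, Finsupp.add_apply, Finsupp.single_apply, Pi.sub_apply, vdelta,
      chiTail]
    split_ifs <;> omega
  · rw [gg_ne i hi, dgen_ne i hi]
    funext n
    simp only [psi0_apply, Finsupp.single_apply, Pi.sub_apply, vdelta]
    split_ifs <;> omega

/-- Weight function used for the first component of `phiH`. -/
noncomputable def wgt : ℕ → ℤ := fun i => if i = 0 then 0 else 1

/-- The map `(c, a) ↦ (a + Σ_{i ≥ 1} cᵢ, c₀ mod 2)`. -/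
noncomputable def phiH : ((ℕ →₀ ℤ) × ℤ) →ₗ[ℤ] ℤ × ZMod 2 :=
  LinearMap.prod
    (LinearMap.snd ℤ (ℕ →₀ ℤ) ℤ +
      (Finsupp.linearCombination ℤ wgt).comp (LinearMap.fst ℤ (ℕ →₀ ℤ) ℤ))
    ((Int.castAddHom (ZMod 2)).toIntLinearMap.comp
      ((Finsupp.lapply 0).comp (LinearMap.fst ℤ (ℕ →₀ ℤ) ℤ)))

theorem phiH_apply (c : ℕ →₀ ℤ) (a : ℤ) :
    phiH (c, a) = (a + Finsupp.linearCombination ℤ wgt c, ((c 0 : ℤ) : ZMod 2)) := rfl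

theorem wgt_zero : wgt 0 = 0 := rfl

theorem wgt_ne (i : ℕ) (hi : i ≠ 0) : wgt i = 1 := by simp [wgt, hi]

theorem phiH_gg (i : ℕ) : phiH (gg i) = 0 := by
  rcases eq_or_ne i 0 with rfl | hi
  · rw [gg_zero, phiH_apply, map_add, Finsupp.linearCombination_single,
      Finsupp.linearCombination_single, wgt_zero, wgt_ne 1 one_ne_zero]
    have c0 : ((Finsupp.single 0 2 + Finsupp.single 1 1 : ℕ →₀ ℤ)) 0 = 2 := by
      simp [Finsupp.single_apply]
    rw [c0, Prod.ext_iff]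
    constructor
    · norm_num
    · show ((2 : ℤ) : ZMod 2) = (0 : ℤ × ZMod 2).2
      rw [Int.cast_two]
      decide
  · rw [gg_ne i hi, phiH_apply, Finsupp.linearCombination_single, wgt_ne i hi,
      Finsupp.single_eq_of_ne' hi, Prod.ext_iff]
    constructor
    · norm_num
    · show ((0 : ℤ) : ZMod 2) = (0 : ℤ × ZMod 2).2
      simp

theorem phiH_surj : Function.Surjective phiH := by
  rintro ⟨m, z⟩
  obtain ⟨k, rfl⟩ := ZMod.intCast_surjective z
  refine ⟨(Finsupp.single 0 k + Finsupp.single 1 m, 0), ?_⟩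
  rw [phiH_apply, map_add, Finsupp.linearCombination_single, Finsupp.linearCombination_single]
  simp [wgt, Finsupp.single_apply]

/-- Auxiliary family: `gg` with the `0`-th member deleted. -/
noncomputable def hfun : ℕ → (ℕ →₀ ℤ) × ℤ := fun j => if j = 0 then 0 else gg j

theorem lc_hfun (c : ℕ →₀ ℤ) :
    Finsupp.linearCombination ℤ hfun c =
      (c - Finsupp.single 0 (c 0), -(Finsupp.linearCombination ℤ wgt c)) := by
  have key : Finsupp.linearCombination ℤ hfun =
      LinearMap.prod (LinearMap.id - (Finsupp.lsingle 0).comp (Finsupp.lapply 0))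
        (-(Finsupp.linearCombination ℤ wgt)) := by
    apply Finsupp.lhom_ext
    intro i b
    rcases eq_or_ne i 0 with rfl | hi
    · simp only [Finsupp.linearCombination_single, hfun, if_pos rfl, smul_zero,
        LinearMap.prod_apply, LinearMap.sub_apply, LinearMap.id_apply, LinearMap.comp_apply,
        Finsupp.lapply_apply, Finsupp.lsingle_apply, Finsupp.single_eq_same,
        LinearMap.neg_apply, wgt_zero, smul_eq_mul, mul_zero, neg_zero, Function.prod]
      simp [Prod.ext_iff, wgt_zero]
    · simp only [Finsupp.linearCombination_single, hfun, if_neg hi, gg_ne i hi,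
        LinearMap.prod_apply, LinearMap.sub_apply, LinearMap.id_apply, LinearMap.comp_apply,
        Finsupp.lapply_apply, Finsupp.lsingle_apply, Finsupp.single_eq_of_ne' hi,
        LinearMap.neg_apply, wgt_ne i hi, smul_eq_mul, mul_one, Function.prod,
        Finsupp.single_zero, sub_zero, Prod.smul_mk, smul_neg, smul_eq_mul]
      rw [Prod.ext_iff]
      constructor
      · simp [Finsupp.smul_single]
      · simp
  rw [key]
  rfl

theorem ker_phiH : LinearMap.ker phiH = Submodule.span ℤ (Set.range gg) := by
  apply le_antisymm
  · rintro ⟨c, a⟩ hp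
    rw [LinearMap.mem_ker, phiH_apply, Prod.ext_iff] at hp
    obtain ⟨h1, h2⟩ := hp
    simp only [Prod.fst_zero, Prod.snd_zero] at h1 h2
    obtain ⟨k, hk⟩ : (2 : ℤ) ∣ c 0 := by
      have := (ZMod.intCast_zmod_eq_zero_iff_dvd (c 0) 2).mp h2
      exact_mod_cast this
    have hdecomp : ((c, a) : (ℕ →₀ ℤ) × ℤ) =
        (k • gg 0 - k • gg 1) + Finsupp.linearCombination ℤ hfun c := by
      rw [lc_hfun]
      rw [Prod.ext_iff]
      constructor
      · show c = (k • gg 0 - k • gg 1).1 + (c - Finsupp.single 0 (c 0))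
        rw [gg_zero, gg_ne 1 one_ne_zero]
        show c = k • (Finsupp.single 0 2 + Finsupp.single 1 1) - k • Finsupp.single 1 1 +
          (c - Finsupp.single 0 (c 0))
        ext n
        rcases eq_or_ne n 0 with rfl | hn
        · simp [Finsupp.single_apply, hk]
          ring
        · rcases eq_or_ne n 1 with rfl | hn1
          · simp [Finsupp.single_apply]
          · simp [Finsupp.single_eq_of_ne' (Ne.symm hn), Finsupp.single_eq_of_ne' (Ne.symm hn1)]
      · show a = (k • gg 0 - k • gg 1).2 + -(Finsupp.linearCombination ℤ wgt c)
        rw [gg_zero, gg_ne 1 one_ne_zero]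
        show a = k • (-1 : ℤ) - k • (-1 : ℤ) + -(Finsupp.linearCombination ℤ wgt c)
        simp only [smul_eq_mul]
        omega
    rw [hdecomp]
    refine add_mem (sub_mem ?_ ?_) ?_
    · exact Submodule.smul_mem _ _ (Submodule.subset_span ⟨0, rfl⟩)
    · exact Submodule.smul_mem _ _ (Submodule.subset_span ⟨1, rfl⟩)
    · have hmem : Finsupp.linearCombination ℤ hfun c ∈
          Submodule.span ℤ (Set.range hfun) := by
        rw [← Finsupp.range_linearCombination]
        exact ⟨c, rfl⟩
      refine Submodule.span_le.mpr ?_ hmem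
      rintro x ⟨j, rfl⟩
      rcases eq_or_ne j 0 with rfl | hj
      · simp only [hfun, if_pos rfl]
        exact Submodule.zero_mem _
      · simp only [hfun, if_neg hj]
        exact Submodule.subset_span ⟨j, rfl⟩
  · rw [Submodule.span_le]
    rintro x ⟨i, rfl⟩
    exact LinearMap.mem_ker.mpr (phiH_gg i)

theorem bdry_eq : bdry = Finsupp.linearCombination ℤ dgen := by
  apply Finsupp.lhom_ext
  intro i b
  simp [bdry, Finsupp.sum_single_index]

theorem range_bdry : LinearMap.range bdry = Submodule.span ℤ (Set.range dgen) := by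
  rw [bdry_eq, Finsupp.range_linearCombination]

theorem map_range_bdry :
    (LinearMap.range bdry).map (psiEquiv.symm : ↥ZG →ₗ[ℤ] (ℕ →₀ ℤ) × ℤ) =
      LinearMap.ker phiH := by
  rw [range_bdry, ker_phiH, Submodule.map_span, ← Set.range_comp]
  simp only [LinearEquiv.coe_coe]
  have h : (⇑psiEquiv.symm ∘ dgen) = gg := by
    funext i
    rw [Function.comp_apply, LinearEquiv.symm_apply_eq, psiEquiv_gg]
  rw [h]

/-- `coker(∂) ≅ ℤ ⊕ ℤ/2ℤ`. -/
theorem coker_bdry : Nonempty ((↥ZG ⧸ LinearMap.range bdry) ≃ₗ[ℤ] ℤ × ZMod 2) := by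
  exact ⟨(Submodule.Quotient.equiv (LinearMap.range bdry) (LinearMap.ker phiH) psiEquiv.symm
    map_range_bdry).trans (phiH.quotKerEquivOfSurjective phiH_surj)⟩

end OTW
end

section
/- Let G⁰ = {v_i : i ∈ ℕ} and let ∂ : ⨁_{i∈ℕ} ℤ → Fun(G⁰, ℤ) be the homomorphism determined by ∂(δ_{v_1}) = −2·χ_{G⁰∖{v_1,v_2}}, ∂(δ_{v_2}) = δ_{v_2} − χ_{G⁰∖{v_1,v_2}}, and ∂(δ_{v_j}) = δ_{v_j} − χ_{G⁰} for j > 2. Then the class of δ_{v_2} in coker(∂) is nonzero and has order 2; in particular coker(∂) has torsion. -/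
namespace OTW

variable {A : Type*}

/-- The images of the generators: `∂δ_{v_1} = −2χ_{G⁰∖{v_1,v_2}}`,
`∂δ_{v_2} = δ_{v_2} − χ_{G⁰∖{v_1,v_2}}` and `∂δ_{v_j} = δ_{v_j} − χ_{G⁰}` for `j > 2`. -/
noncomputable def d13 : ℕ → (ℕ → ℤ) := fun i =>
  if i = 0 then (-2 : ℤ) • chiTail
  else if i = 1 then vdelta 1 - chiTail
  else vdelta i - fun _ => 1

/-- The map `∂ : ⨁_{i∈ℕ} ℤ → Fun(G⁰, ℤ)`. -/
noncomputable def bdry13 : (ℕ →₀ ℤ) →ₗ[ℤ] (ℕ → ℤ) := Finsupp.lift (ℕ → ℤ) ℤ ℕ d13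

/-- the class of `δ_{v_2}` in `coker(∂)` is nonzero and has order 2. -/
theorem delta_v2_torsion :
    (Submodule.Quotient.mk (p := LinearMap.range bdry13) (vdelta 1)) ≠ 0 ∧
    (2 : ℤ) • (Submodule.Quotient.mk (p := LinearMap.range bdry13) (vdelta 1)) = 0 := by
  constructor
  · intro h
    rw [Submodule.Quotient.mk_eq_zero] at h
    obtain ⟨f, hf⟩ := h
    set n := f.support.sup id + 3 with hn
    have hfn : n ∉ f.support := by
      intro hmem
      have := Finset.le_sup (f := id) hmem
      simp only [id] at this
      omega
    have heval : ∀ k, bdry13 f k = f.sum fun i c => c * d13 i k := by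
      intro k
      rw [bdry13, Finsupp.lift_apply, Finsupp.sum, Finsupp.sum, Finset.sum_apply]
      exact Finset.sum_congr rfl fun i _ => rfl
    have key : (2 : ℤ) ∣ (bdry13 f 1 + bdry13 f n) := by
      rw [heval 1, heval n, Finsupp.sum, Finsupp.sum, ← Finset.sum_add_distrib]
      apply Finset.dvd_sum
      intro i hi
      have hin : i ≠ n := fun h => hfn (h ▸ hi)
      have : f i * d13 i 1 + f i * d13 i n = f i * (d13 i 1 + d13 i n) := by ring
      rw [this]
      apply Dvd.dvd.mul_left
      rcases Nat.lt_or_ge i 2 with h2 | h2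
      · interval_cases i <;> simp [d13, chiTail, vdelta, hn]
      · have h0 : i ≠ 0 := by omega
        have h1 : i ≠ 1 := by omega
        have hn1 : n ≠ 1 := by omega
        simp only [d13, if_neg h0, if_neg h1, Pi.sub_apply, vdelta,
          if_neg (Ne.symm h1), if_neg (Ne.symm hin)]
        decide
    rw [hf] at key
    have h1 : vdelta 1 1 = 1 := by simp [vdelta]
    have h2 : vdelta 1 n = 0 := by
      simp only [vdelta, if_neg (show n ≠ 1 by omega)]
    rw [h1, h2] at key
    omega
  · rw [← Submodule.Quotient.mk_smul, Submodule.Quotient.mk_eq_zero]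
    refine ⟨Finsupp.single 1 2 - Finsupp.single 0 1, ?_⟩
    rw [map_sub]
    have hs : ∀ (i : ℕ) (c : ℤ), bdry13 (Finsupp.single i c) = c • d13 i := by
      intro i c
      rw [bdry13, Finsupp.lift_apply, Finsupp.sum_single_index]
      simp
    rw [hs, hs]
    funext k
    rcases Nat.lt_or_ge k 2 with h | h
    · interval_cases k <;> simp [d13, vdelta, chiTail]
    · have h0 : k ≠ 0 := by omega
      have h1 : k ≠ 1 := by omega
      simp [d13, vdelta, chiTail, h0, h1, Ne.symm h1]

end OTW
end

section
/- Let G be an ultragraph with infinitely many edges, no sinks, s⁻¹(r(e))^c finite for each edge e, and such that for each vertex v either s⁻¹(v) or its complement is finite. For A, B in the algebra G⁰ of generalized vertices, define X_A = {x ∈ X : s(x) ∈ A} if s⁻¹(A) is finite and X_A = {x ∈ X : s(x) ∈ A} ∪ {Ø} if s⁻¹(A)^c is finite. Then each X_A is clopen in the edge shift X, and X_A ∩ X_B = X_{A∩B} and X_A ∪ X_B = X_{A∪B}. -/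
namespace OTW

variable {A : Type*}

/-- The algebra `G⁰` of generalized vertices: the smallest collection of subsets of the
vertex set containing the singletons and the ranges, closed under finite unions and
intersections. -/
inductive GAlg {V E : Type*} (G : Ultragraph V E) : Set V → Prop
  | vtx (v : V) : GAlg G {v}
  | range (e : E) : GAlg G (G.r e)
  | union {A B : Set V} : GAlg G A → GAlg G B → GAlg G (A ∪ B)
  | inter {A B : Set V} : GAlg G A → GAlg G B → GAlg G (A ∩ B)

/-- The set `X_A ⊆ X`: elements whose source lies in `A`, together with the empty word
when `s⁻¹(A)ᶜ` is finite. -/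
def XA {V E : Type*} (G : Ultragraph V E) (A : Set V) : Set ↥(edgeShift G) :=
  {x | (∃ e, x.1.1 0 = some e ∧ G.s e ∈ A) ∨
    (({e : E | G.s e ∈ A}ᶜ).Finite ∧ x.1.1 0 = none)}

lemma cyl_open {E : Type*} (w : List E) (F : Finset E) :
    IsOpen (Subtype.val ⁻¹' Cyl w F : Set ↥(FullShift E)) :=
  TopologicalSpace.isOpen_generateFrom_of_mem ⟨w, F, rfl⟩

lemma clopen_CF {V E : Type*} (G : Ultragraph V E) (F : Finset E) :
    IsClopen {x : ↥(edgeShift G) | ∀ f ∈ F, x.1.1 0 ≠ some f} := by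
  constructor
  · rw [← isOpen_compl_iff]
    have h : {x : ↥(edgeShift G) | ∀ f ∈ F, x.1.1 0 ≠ some f}ᶜ =
        ⋃ f ∈ F, Subtype.val ⁻¹' (Subtype.val ⁻¹' Cyl [f] (∅ : Finset E)) := by
      ext x
      simp only [Set.mem_compl_iff, Set.mem_setOf_eq, not_forall, Set.mem_iUnion,
        Set.mem_preimage, Cyl, List.length_singleton, Finset.notMem_empty,
        IsEmpty.forall_iff, implies_true, and_true, not_not]
      constructor
      · rintro ⟨f, hf, hx⟩
        exact ⟨f, hf, fun i hi => by interval_cases i; simpa using hx⟩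
      · rintro ⟨f, hf, hx⟩
        exact ⟨f, hf, by simpa using hx 0 (by norm_num)⟩
    rw [h]
    exact isOpen_biUnion fun f _ => (cyl_open [f] ∅).preimage continuous_subtype_val
  · have h : {x : ↥(edgeShift G) | ∀ f ∈ F, x.1.1 0 ≠ some f} =
        Subtype.val ⁻¹' (Subtype.val ⁻¹' Cyl ([] : List E) F) := by
      ext x
      simp [Cyl]
    rw [h]
    exact (cyl_open [] F).preimage continuous_subtype_val

lemma galg_dichotomy {V E : Type*} (G : Ultragraph V E)
    (hfin : ∀ e : E, {f : E | G.s f ∉ G.r e}.Finite)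
    (hvtx : ∀ v : V, {e : E | G.s e = v}.Finite ∨ ({e : E | G.s e = v}ᶜ).Finite)
    {A : Set V} (hA : GAlg G A) :
    {e : E | G.s e ∈ A}.Finite ∨ ({e : E | G.s e ∈ A}ᶜ).Finite := by
  induction hA with
  | vtx v => simpa using hvtx v
  | range e => exact Or.inr (hfin e)
  | @union A B _ _ ihA ihB =>
    have hU : {e : E | G.s e ∈ A ∪ B} = {e : E | G.s e ∈ A} ∪ {e : E | G.s e ∈ B} := rfl
    rcases ihA with hA | hA
    · rcases ihB with hB | hB
      · left; rw [hU]; exact hA.union hB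
      · right
        refine hB.subset ?_
        rw [hU, Set.compl_union]
        exact Set.inter_subset_right
    · right
      refine hA.subset ?_
      rw [hU, Set.compl_union]
      exact Set.inter_subset_left
  | @inter A B _ _ ihA ihB =>
    have hU : {e : E | G.s e ∈ A ∩ B} = {e : E | G.s e ∈ A} ∩ {e : E | G.s e ∈ B} := rfl
    rcases ihA with hA | hA
    · left; exact (hA.inter_of_left _).subset (by rw [hU])
    · rcases ihB with hB | hB
      · left; exact (hB.inter_of_right _).subset (by rw [hU])
      · right
        rw [hU, Set.compl_inter]
        exact hA.union hB

lemma XA_clopen_aux {V E : Type*} [Infinite E] (G : Ultragraph V E)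
    {A : Set V}
    (hd : {e : E | G.s e ∈ A}.Finite ∨ ({e : E | G.s e ∈ A}ᶜ).Finite) :
    IsClopen (XA G A) := by
  rcases hd with hA | hA
  · have hcompl : ¬ ({e : E | G.s e ∈ A}ᶜ).Finite := by
      intro hc
      exact Set.infinite_univ (α := E)
        (((hA.union hc).subset (by simp [Set.union_compl_self])))
    have h : XA G A = {x : ↥(edgeShift G) | ∀ f ∈ hA.toFinset, x.1.1 0 ≠ some f}ᶜ := by
      ext x
      simp only [XA, Set.mem_setOf_eq, Set.mem_compl_iff, not_forall, not_not,
        Set.Finite.mem_toFinset, Set.mem_setOf_eq]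
      constructor
      · rintro (⟨e, he, heA⟩ | ⟨hc, _⟩)
        · exact ⟨e, heA, he⟩
        · exact absurd hc hcompl
      · rintro ⟨e, heA, he⟩
        exact Or.inl ⟨e, he, heA⟩
    rw [h]
    exact (clopen_CF G _).compl
  · have h : XA G A = {x : ↥(edgeShift G) | ∀ f ∈ hA.toFinset, x.1.1 0 ≠ some f} := by
      ext x
      simp only [XA, Set.mem_setOf_eq, Set.Finite.mem_toFinset, Set.mem_compl_iff,
        Set.mem_setOf_eq]
      constructor
      · rintro (⟨e, he, heA⟩ | ⟨_, hnone⟩) f hf hx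
        · rw [he] at hx
          exact hf (by injection hx with h'; rw [← h']; exact heA)
        · rw [hnone] at hx; exact nomatch hx
      · intro hx
        cases h0 : x.1.1 0 with
        | none => exact Or.inr ⟨hA, rfl⟩
        | some e =>
          left
          refine ⟨e, rfl, ?_⟩
          by_contra heA
          exact hx e heA h0
    rw [h]
    exact clopen_CF G _

lemma mem_XA_some {V E : Type*} {G : Ultragraph V E} {A : Set V}
    {x : ↥(edgeShift G)} {e : E} (h0 : x.1.1 0 = some e) :
    x ∈ XA G A ↔ G.s e ∈ A := by
  constructor
  · rintro (⟨f, hf, hfA⟩ | ⟨_, hn⟩)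
    · rw [h0] at hf; cases hf; exact hfA
    · rw [h0] at hn; exact nomatch hn
  · exact fun h => Or.inl ⟨e, h0, h⟩

lemma mem_XA_none {V E : Type*} {G : Ultragraph V E} {A : Set V}
    {x : ↥(edgeShift G)} (h0 : x.1.1 0 = none) :
    x ∈ XA G A ↔ ({e : E | G.s e ∈ A}ᶜ).Finite := by
  constructor
  · rintro (⟨f, hf, _⟩ | ⟨h, _⟩)
    · rw [h0] at hf; exact nomatch hf
    · exact h
  · exact fun h => Or.inr ⟨h, h0⟩

/-- each `X_A` is clopen in the edge shift, `X_A ∩ X_B = X_{A∩B}` and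
`X_A ∪ X_B = X_{A∪B}`. -/
theorem XA_clopen_inter_union {V E : Type*} [Countable V] [Countable E] [Infinite E]
    (G : Ultragraph V E) (hr : ∀ e, (G.r e).Nonempty)
    (hnosink : ∀ v : V, ∃ e, G.s e = v)
    (hfin : ∀ e : E, {f : E | G.s f ∉ G.r e}.Finite)
    (hvtx : ∀ v : V, {e : E | G.s e = v}.Finite ∨ ({e : E | G.s e = v}ᶜ).Finite)
    (A B : Set V) (hA : GAlg G A) (hB : GAlg G B) :
    IsClopen (XA G A) ∧ XA G A ∩ XA G B = XA G (A ∩ B) ∧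
      XA G A ∪ XA G B = XA G (A ∪ B) := by
  have hdA := galg_dichotomy G hfin hvtx hA
  have hdB := galg_dichotomy G hfin hvtx hB
  refine ⟨XA_clopen_aux G hdA, ?_, ?_⟩
  · ext x
    cases h0 : x.1.1 0 with
    | some e =>
      rw [Set.mem_inter_iff, mem_XA_some h0, mem_XA_some h0, mem_XA_some h0]
      exact Iff.rfl
    | none =>
      rw [Set.mem_inter_iff, mem_XA_none h0, mem_XA_none h0, mem_XA_none h0]
      have hc : {e : E | G.s e ∈ A ∩ B}ᶜ = {e : E | G.s e ∈ A}ᶜ ∪ {e : E | G.s e ∈ B}ᶜ := by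
        ext e
        simp only [Set.mem_compl_iff, Set.mem_setOf_eq, Set.mem_inter_iff, Set.mem_union]
        tauto
      rw [hc]
      exact ⟨fun ⟨h1, h2⟩ => h1.union h2,
        fun h => ⟨h.subset Set.subset_union_left, h.subset Set.subset_union_right⟩⟩
  · ext x
    cases h0 : x.1.1 0 with
    | some e =>
      rw [Set.mem_union, mem_XA_some h0, mem_XA_some h0, mem_XA_some h0]
      exact Iff.rfl
    | none =>
      rw [Set.mem_union, mem_XA_none h0, mem_XA_none h0, mem_XA_none h0]
      constructor
      · rintro (h | h)
        · refine h.subset fun e he => ?_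
          simp only [Set.mem_compl_iff, Set.mem_setOf_eq, Set.mem_union] at he ⊢
          tauto
        · refine h.subset fun e he => ?_
          simp only [Set.mem_compl_iff, Set.mem_setOf_eq, Set.mem_union] at he ⊢
          tauto
      · intro h
        rcases hdA with hA' | hA'
        · rcases hdB with hB' | hB'
          · exfalso
            refine Set.infinite_univ (α := E) (((hA'.union hB').union h).subset ?_)
            intro e _
            by_cases heA : G.s e ∈ A
            · exact Or.inl (Or.inl heA)
            · by_cases heB : G.s e ∈ B
              · exact Or.inl (Or.inr heB)
              · exact Or.inr (by simp [heA, heB])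
          · exact Or.inr hB'
        · exact Or.inl hA'

end OTW
end
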